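/- Dyadic approximation of cross Young integrals: Let 0<α<1/2, T>0, let u∈C^{α-hld}([0,T],ℝ^d) with u_0=0, let v∈H^{1/2,e} (absolutely continuous with v_0=0 and square-integrable derivative), and let v(m) be the piecewise-linear interpolation of v over the dyadic partition {kT2^{-m}: 0≤k≤2^m}. Define I[u,v]_{s,t}:=∫_s^t(u_r−u_s)⊗dv_r and I[u,v(m)] analogously. Then: (i) sup_{m∈ℕ}‖I[u,v(m)]‖_{(α+1/2)-hld} ≤ C‖u‖_{α-hld}(1+‖v‖_{H^{1/2,e}}), where ‖ψ‖_{(α+1/2)-hld}=sup_{s<t}|ψ_{s,t}|/(t−s)^{α+1/2}; and (ii) for every 0<κ<α there is C>0 with ‖I[u,v(m)]−I[u,v]‖_{(α+1/2−κ)-hld} ≤ C·2^{−κm}·‖u‖_{α-hld}(1+‖v‖_{H^{1/2,e}}) for all m∈ℕ; in particular I[u,v(m)]→I[u,v] in (α+1/2−κ)-Hölder norm as m→∞. The constants C depend only on α, κ and T. -/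

import Mathlib

open scoped BigOperators
open MeasureTheory Filter

noncomputable section

/-- Two-parameter `η`-Hölder seminorm over the simplex `{(s,t) : 0 ≤ s < t ≤ T}`. -/
def hnorm2 {E : Type*} [NormedAddCommGroup E] (T η : ℝ) (ψ : ℝ → ℝ → E) : ℝ :=
  ⨆ p : {p : ℝ × ℝ // 0 ≤ p.1 ∧ p.1 < p.2 ∧ p.2 ≤ T},
    ‖ψ p.1.1 p.1.2‖ / (p.1.2 - p.1.1) ^ η

/-- `η`-Hölder seminorm of a one-parameter path on `[0,T]`. -/
def hnormP {E : Type*} [NormedAddCommGroup E] (T η : ℝ) (φ : ℝ → E) : ℝ :=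
  hnorm2 T η fun s t => φ t - φ s

/-- A level-3 `α`-Hölder rough path over `ℝ^d` on `[0,T]`, written in coordinates:
`X¹`, `X²`, `X³` satisfy Chen's relation in the truncated tensor algebra and the
`iα`-Hölder bounds. -/
structure RoughPath3 (T α : ℝ) (d : ℕ) where
  X1 : ℝ → ℝ → Fin d → ℝ
  X2 : ℝ → ℝ → Fin d → Fin d → ℝ
  X3 : ℝ → ℝ → Fin d → Fin d → Fin d → ℝ
  cont1 : ContinuousOn (fun p : ℝ × ℝ => X1 p.1 p.2)
    {p : ℝ × ℝ | 0 ≤ p.1 ∧ p.1 ≤ p.2 ∧ p.2 ≤ T}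
  cont2 : ContinuousOn (fun p : ℝ × ℝ => X2 p.1 p.2)
    {p : ℝ × ℝ | 0 ≤ p.1 ∧ p.1 ≤ p.2 ∧ p.2 ≤ T}
  cont3 : ContinuousOn (fun p : ℝ × ℝ => X3 p.1 p.2)
    {p : ℝ × ℝ | 0 ≤ p.1 ∧ p.1 ≤ p.2 ∧ p.2 ≤ T}
  chen1 : ∀ s u t, 0 ≤ s → s ≤ u → u ≤ t → t ≤ T → ∀ i,
    X1 s t i = X1 s u i + X1 u t i
  chen2 : ∀ s u t, 0 ≤ s → s ≤ u → u ≤ t → t ≤ T → ∀ i j,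
    X2 s t i j = X2 s u i j + X2 u t i j + X1 s u i * X1 u t j
  chen3 : ∀ s u t, 0 ≤ s → s ≤ u → u ≤ t → t ≤ T → ∀ i j k,
    X3 s t i j k = X3 s u i j k + X3 u t i j k
      + X1 s u i * X2 u t j k + X2 s u i j * X1 u t k
  bdd1 : ∃ C : ℝ, ∀ s t, 0 ≤ s → s ≤ t → t ≤ T → ‖X1 s t‖ ≤ C * (t - s) ^ α
  bdd2 : ∃ C : ℝ, ∀ s t, 0 ≤ s → s ≤ t → t ≤ T → ‖X2 s t‖ ≤ C * (t - s) ^ (2*α)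
  bdd3 : ∃ C : ℝ, ∀ s t, 0 ≤ s → s ≤ t → t ≤ T → ‖X3 s t‖ ≤ C * (t - s) ^ (3*α)

/-- The `α`-Hölder rough path norm `|||X|||_{α-hld} = Σ_{i=1}^3 ‖X^i‖_{iα-hld}`. -/
def RoughPath3.tnorm {T α : ℝ} {d : ℕ} (X : RoughPath3 T α d) : ℝ :=
  hnorm2 T α X.X1 + hnorm2 T (2*α) X.X2 + hnorm2 T (3*α) X.X3

/-- The inhomogeneous rough path distance `ρ_α(X, X̃)`. -/
def rpDist {T α : ℝ} {d : ℕ} (X Y : RoughPath3 T α d) : ℝ :=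
  hnorm2 T α (fun s t => X.X1 s t - Y.X1 s t)
  + hnorm2 T (2*α) (fun s t => X.X2 s t - Y.X2 s t)
  + hnorm2 T (3*α) (fun s t => X.X3 s t - Y.X3 s t)

/-- Auxiliary: the dyadic floor `⌊t 2^m / T⌋` as a real number. -/
def dyadicFloor (T : ℝ) (m : ℕ) (t : ℝ) : ℝ :=
  ((⌊t * 2 ^ m / T⌋ : ℤ) : ℝ)

/-- The `m`-th dyadic piecewise-linear interpolation of a path over the partition
`{k T 2^{-m} : 0 ≤ k ≤ 2^m}` of `[0,T]`. -/
def pwl (T : ℝ) (m : ℕ) {E : Type*} [AddCommGroup E] [Module ℝ E]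
    (x : ℝ → E) (t : ℝ) : E :=
  x (dyadicFloor T m t * T / 2 ^ m)
    + (t * 2 ^ m / T - dyadicFloor T m t) •
      (x ((dyadicFloor T m t + 1) * T / 2 ^ m) - x (dyadicFloor T m t * T / 2 ^ m))

/-- The primitive `v_t = ∫_0^t v'_s ds` of an `L²` derivative. -/
def antider {e : ℕ} (v' : ℝ → Fin e → ℝ) (t : ℝ) : Fin e → ℝ :=
  ∫ s in (0:ℝ)..t, v' s

/-- The cross integral `I[u,v]_{s,t} = ∫_s^t (u_r - u_s) ⊗ v'_r dr`. -/
def crossI {d e : ℕ} (u : ℝ → Fin d → ℝ) (v' : ℝ → Fin e → ℝ) (s t : ℝ) :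
    Fin d → Fin e → ℝ :=
  fun i j => ∫ r in s..t, (u r i - u s i) * v' r j

/-- The cross integral `I[u, v(m)]_{s,t}` against the `m`-th dyadic piecewise-linear
interpolation `v(m)` of `v`. -/
def crossIm (T : ℝ) (m : ℕ) {d e : ℕ} (u : ℝ → Fin d → ℝ)
    (v' : ℝ → Fin e → ℝ) (s t : ℝ) : Fin d → Fin e → ℝ :=
  fun i j => ∫ r in s..t,
    (u r i - u s i) * deriv (fun τ => pwl T m (antider v') τ j) r

namespace DCYA

/-- Cauchy-Schwarz in L¹-L² form for interval integrals. -/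
theorem integral_abs_le_sqrt {a b : ℝ} (hab : a ≤ b) {g : ℝ → ℝ}
    (hg : IntervalIntegrable g volume a b)
    (hg2 : IntervalIntegrable (fun x => (g x)^2) volume a b) :
    ∫ x in a..b, |g x| ≤ Real.sqrt (b - a) * Real.sqrt (∫ x in a..b, (g x)^2) := by
  set I2 := ∫ x in a..b, (g x)^2 with hI2def
  have hI2 : 0 ≤ I2 :=
    intervalIntegral.integral_nonneg hab (fun x _ => sq_nonneg _)
  rcases eq_or_lt_of_le hab with rfl | hlt
  · simp [Real.sqrt_nonneg]
  have hL : 0 < b - a := sub_pos.2 hlt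
  have key : ∀ lam : ℝ, 0 < lam →
      ∫ x in a..b, |g x| ≤ I2 / (2*lam) + lam/2 * (b-a) := by
    intro lam hlam
    have h1 : ∫ x in a..b, |g x| ≤ ∫ x in a..b, ((g x)^2/(2*lam) + lam/2) := by
      refine intervalIntegral.integral_mono_on hab hg.abs
        ((hg2.div_const _).add intervalIntegrable_const) (fun x _ => ?_)
      have h1 : 2*lam*|g x| ≤ (g x)^2 + lam^2 := by
        nlinarith [sq_nonneg (|g x| - lam), sq_abs (g x)]
      have h2 : |g x| ≤ ((g x)^2 + lam^2)/(2*lam) := by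
        rw [le_div_iff₀ (by positivity)]; linarith
      calc |g x| ≤ ((g x)^2 + lam^2)/(2*lam) := h2
        _ = (g x)^2/(2*lam) + lam/2 := by field_simp
    have h2 : ∫ x in a..b, ((g x)^2/(2*lam) + lam/2)
        = I2/(2*lam) + lam/2 * (b-a) := by
      rw [intervalIntegral.integral_add (hg2.div_const _) intervalIntegrable_const,
        intervalIntegral.integral_div, intervalIntegral.integral_const,
        smul_eq_mul]
      ring
    linarith
  rcases eq_or_lt_of_le hI2 with hI20 | hI2pos
  · have : ∫ x in a..b, |g x| ≤ 0 := by
      refine le_of_forall_pos_le_add (fun ε hε => ?_)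
      have := key (2*ε/(b-a)) (by positivity)
      rw [← hI20] at this
      calc ∫ x in a..b, |g x| ≤ 0/(2*(2*ε/(b-a))) + (2*ε/(b-a))/2*(b-a) := this
        _ = 0 + ε := by field_simp; ring
    calc ∫ x in a..b, |g x| ≤ 0 := this
      _ ≤ _ := by positivity
  · set s2 := Real.sqrt I2 with hs2def
    set sL := Real.sqrt (b-a) with hsLdef
    have hs2 : 0 < s2 := Real.sqrt_pos.2 hI2pos
    have hsL : 0 < sL := Real.sqrt_pos.2 hL
    have hs2sq : s2^2 = I2 := Real.sq_sqrt hI2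
    have hsLsq : sL^2 = b - a := Real.sq_sqrt hL.le
    have := key (s2/sL) (by positivity)
    calc ∫ x in a..b, |g x| ≤ I2/(2*(s2/sL)) + (s2/sL)/2*(b-a) := this
      _ = sL * s2 := by
          rw [← hs2sq, ← hsLsq]; field_simp; ring

/-- pointwise bound + continuity + integrable factor gives estimate. -/
theorem est_piece {f g : ℝ → ℝ} {a b C : ℝ} (hab : a ≤ b) (hC : 0 ≤ C)
    (hf : ∀ r ∈ Set.Icc a b, |f r| ≤ C)
    (hfc : ContinuousOn f (Set.Icc a b))
    (hg : IntervalIntegrable g volume a b)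
    (hg2 : IntervalIntegrable (fun x => (g x)^2) volume a b) :
    |∫ r in a..b, f r * g r|
      ≤ C * (Real.sqrt (b-a) * Real.sqrt (∫ x in a..b, (g x)^2)) := by
  have hfc' : ContinuousOn f (Set.uIcc a b) := by rwa [Set.uIcc_of_le hab]
  have hint : IntervalIntegrable (fun x => f x * g x) volume a b :=
    hg.continuousOn_mul hfc'
  calc |∫ r in a..b, f r * g r| ≤ ∫ r in a..b, |f r * g r| :=
        intervalIntegral.abs_integral_le_integral_abs hab
    _ ≤ ∫ r in a..b, C * |g r| := by
        refine intervalIntegral.integral_mono_on hab hint.abs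
          (hg.abs.const_mul _) (fun x hx => ?_)
        rw [abs_mul]
        exact mul_le_mul_of_nonneg_right (hf x hx) (abs_nonneg _)
    _ = C * ∫ r in a..b, |g r| := intervalIntegral.integral_const_mul _ _
    _ ≤ _ := mul_le_mul_of_nonneg_left (integral_abs_le_sqrt hab hg hg2) hC

theorem cross_exp {x y α : ℝ} (hx : 0 < x) (hxy : x ≤ y) (hα1 : 0 ≤ α)
    (hα2 : α ≤ 1/2) : y^α * x^((1:ℝ)/2) ≤ x^α * y^((1:ℝ)/2) := by
  have hy : 0 < y := hx.trans_le hxy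
  have e1 : x^((1:ℝ)/2) = x^α * x^((1:ℝ)/2 - α) := by
    rw [← Real.rpow_add hx]; ring_nf
  have e2 : y^α * y^((1:ℝ)/2 - α) = y^((1:ℝ)/2) := by
    rw [← Real.rpow_add hy]; ring_nf
  calc y^α * x^((1:ℝ)/2) = y^α * (x^α * x^((1:ℝ)/2 - α)) := by rw [← e1]
    _ ≤ y^α * (x^α * y^((1:ℝ)/2 - α)) := by
        have := Real.rpow_le_rpow hx.le hxy (by linarith : (0:ℝ) ≤ 1/2 - α)
        have h0 : (0:ℝ) ≤ y^α := Real.rpow_nonneg hy.le _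
        have h1 : (0:ℝ) ≤ x^α := Real.rpow_nonneg hx.le _
        exact mul_le_mul_of_nonneg_left (mul_le_mul_of_nonneg_left this h1) h0
    _ = x^α * y^((1:ℝ)/2) := by rw [← e2]; ring

theorem interp {x A B θ : ℝ} (hx : 0 ≤ x) (hA : x ≤ A) (hB : x ≤ B)
    (hθ0 : 0 ≤ θ) (hθ1 : θ ≤ 1) : x ≤ A^(1-θ) * B^θ := by
  have hA0 : 0 ≤ A := hx.trans hA
  have hB0 : 0 ≤ B := hx.trans hB
  rcases eq_or_lt_of_le hx with h0 | hxpos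
  · have : (0:ℝ) ≤ A^(1-θ) * B^θ :=
      mul_nonneg (Real.rpow_nonneg hA0 _) (Real.rpow_nonneg hB0 _)
    linarith
  · have e : x = x^(1-θ) * x^θ := by
      rw [← Real.rpow_add hxpos]; norm_num
    rw [e]
    exact
        mul_le_mul (Real.rpow_le_rpow hx hA (by linarith))
          (Real.rpow_le_rpow hx hB hθ0) (Real.rpow_nonneg hx _)
          (Real.rpow_nonneg hA0 _)

/-- finite CS: Σ √(x p) ≤ √n √(Σ x p). -/
theorem sum_sqrt_le {n : ℕ} {x : ℕ → ℝ} (hx : ∀ p, 0 ≤ x p) :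
    ∑ p ∈ Finset.range n, Real.sqrt (x p)
      ≤ Real.sqrt n * Real.sqrt (∑ p ∈ Finset.range n, x p) := by
  have := Real.sum_sqrt_mul_sqrt_le (Finset.range n)
    (f := fun _ => (1:ℝ)) (g := x) (fun _ => zero_le_one) hx
  simpa using this


variable {e : ℕ}

def dptZ (T : ℝ) (m : ℕ) (k : ℤ) : ℝ := k * T / 2^m

def VjZ (T : ℝ) (m : ℕ) (gv : ℝ → ℝ) (k : ℤ) : ℝ :=
  ∫ r in dptZ T m k..dptZ T m (k+1), gv r

def Dstep (T : ℝ) (m : ℕ) (gv : ℝ → ℝ) (r : ℝ) : ℝ :=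
  2^m/T * VjZ T m gv ⌊r * 2^m / T⌋

theorem dptZ_mono {T : ℝ} (hT : 0 < T) (m : ℕ) {k l : ℤ} (h : k ≤ l) :
    dptZ T m k ≤ dptZ T m l := by
  unfold dptZ
  have : (k:ℝ) ≤ (l:ℝ) := by exact_mod_cast h
  have h2 : (0:ℝ) < 2^m := by positivity
  gcongr

theorem dptZ_succ_sub {T : ℝ} (m : ℕ) (k : ℤ) :
    dptZ T m (k+1) - dptZ T m k = T/2^m := by
  unfold dptZ
  push_cast
  ring

theorem floor_eq_of_mem {T : ℝ} (hT : 0 < T) (m : ℕ) {k : ℤ} {r : ℝ}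
    (h1 : dptZ T m k ≤ r) (h2 : r < dptZ T m (k+1)) :
    ⌊r * 2^m / T⌋ = k := by
  have h2m : (0:ℝ) < 2^m := by positivity
  rw [Int.floor_eq_iff]
  constructor
  · rw [le_div_iff₀ hT]
    unfold dptZ at h1
    rw [div_le_iff₀ h2m] at h1
    linarith
  · rw [div_lt_iff₀ hT]
    unfold dptZ at h2
    rw [lt_div_iff₀ h2m] at h2
    push_cast at h2 ⊢
    linarith

theorem floor_pt_le {T : ℝ} (hT : 0 < T) (m : ℕ) (r : ℝ) :
    dptZ T m ⌊r * 2^m / T⌋ ≤ r := by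
  have h2m : (0:ℝ) < 2^m := by positivity
  unfold dptZ
  rw [div_le_iff₀ h2m]
  have := Int.floor_le (r * 2^m / T)
  rw [le_div_iff₀ hT] at this
  linarith

theorem lt_floor_pt_succ {T : ℝ} (hT : 0 < T) (m : ℕ) (r : ℝ) :
    r < dptZ T m (⌊r * 2^m / T⌋ + 1) := by
  have h2m : (0:ℝ) < 2^m := by positivity
  unfold dptZ
  rw [lt_div_iff₀ h2m]
  have := Int.lt_floor_add_one (r * 2^m / T)
  rw [div_lt_iff₀ hT] at this
  push_cast at this ⊢
  linarith

theorem deriv_pwl {T : ℝ} (hT : 0 < T) (m : ℕ) (w : ℝ → Fin e → ℝ) (j : Fin e)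
    {r : ℝ} (h : r * 2^m / T ≠ ((⌊r * 2^m / T⌋ : ℤ) : ℝ)) :
    deriv (fun τ => pwl T m w τ j) r
      = 2^m/T * (w (dptZ T m (⌊r * 2^m/T⌋ + 1)) j - w (dptZ T m ⌊r * 2^m/T⌋) j) := by
  set k := ⌊r * 2^m/T⌋ with hk
  have h1 : (k:ℝ) < r * 2^m/T := lt_of_le_of_ne (Int.floor_le _) (Ne.symm h)
  have h2 : r * 2^m/T < (k:ℝ)+1 := Int.lt_floor_add_one _
  have hcont : Continuous (fun τ : ℝ => τ * 2^m / T) := by fun_prop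
  have hS : IsOpen ((fun τ : ℝ => τ * 2^m / T) ⁻¹' (Set.Ioo (k:ℝ) ((k:ℝ)+1))) :=
    isOpen_Ioo.preimage hcont
  have hmem : r ∈ (fun τ : ℝ => τ * 2^m / T) ⁻¹' (Set.Ioo (k:ℝ) ((k:ℝ)+1)) := ⟨h1, h2⟩
  have hev : ∀ᶠ τ in nhds r, dyadicFloor T m τ = (k:ℝ) := by
    filter_upwards [hS.mem_nhds hmem] with τ hτ
    have : ⌊τ * 2^m/T⌋ = k := Int.floor_eq_iff.mpr ⟨hτ.1.le, by exact_mod_cast hτ.2⟩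
    rw [dyadicFloor, this]
  have heq : (fun τ => pwl T m w τ j) =ᶠ[nhds r] (fun τ =>
      w ((k:ℝ)*T/2^m) j
        + (τ * 2^m/T - (k:ℝ)) * (w (((k:ℝ)+1)*T/2^m) j - w ((k:ℝ)*T/2^m) j)) := by
    filter_upwards [hev] with τ hτ
    simp only [pwl, hτ, Pi.add_apply, Pi.smul_apply, Pi.sub_apply, smul_eq_mul]
  rw [heq.deriv_eq]
  have base : HasDerivAt (fun τ : ℝ => τ * 2^m / T) ((2:ℝ)^m/T) r := by
    simpa using ((hasDerivAt_id r).mul_const ((2:ℝ)^m)).div_const T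
  have hd := ((base.sub_const (k:ℝ)).mul_const
    (w (((k:ℝ)+1)*T/2^m) j - w ((k:ℝ)*T/2^m) j)).const_add (w ((k:ℝ)*T/2^m) j)
  rw [hd.deriv]
  have e1 : dptZ T m (k+1) = ((k:ℝ)+1)*T/2^m := by unfold dptZ; push_cast; ring
  have e2 : dptZ T m k = (k:ℝ)*T/2^m := rfl
  simp only [e1, e2]

theorem antider_apply {v' : ℝ → Fin e → ℝ} {T : ℝ}
    (hv : IntervalIntegrable v' volume 0 T) {a : ℝ}
    (h0 : 0 ≤ a) (haT : a ≤ T) (j : Fin e) :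
    antider v' a j = ∫ r in (0:ℝ)..a, v' r j := by
  have hva : IntervalIntegrable v' volume 0 a := by
    refine hv.mono_set ?_
    rw [Set.uIcc_of_le h0, Set.uIcc_of_le (h0.trans haT)]
    exact Set.Icc_subset_Icc le_rfl haT
  have := (ContinuousLinearMap.proj (R:=ℝ) (φ := fun _ : Fin e => ℝ)
    j).intervalIntegral_comp_comm hva
  simpa [antider, ContinuousLinearMap.proj_apply] using this.symm

theorem comp_ii {v' : ℝ → Fin e → ℝ} {T : ℝ}
    (hv : IntervalIntegrable v' volume 0 T) {a b : ℝ}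
    (hsub : Set.uIcc a b ⊆ Set.uIcc 0 T) (j : Fin e) :
    IntervalIntegrable (fun r => v' r j) volume a b := by
  have h := hv.mono_set hsub
  constructor
  · simpa [IntegrableOn] using (ContinuousLinearMap.proj (R:=ℝ)
      (φ := fun _ : Fin e => ℝ) j).integrable_comp h.1
  · simpa [IntegrableOn] using (ContinuousLinearMap.proj (R:=ℝ)
      (φ := fun _ : Fin e => ℝ) j).integrable_comp h.2

theorem comp_sq_ii {v' : ℝ → Fin e → ℝ} {T : ℝ}
    (hv : IntervalIntegrable v' volume 0 T)
    (hv2 : IntervalIntegrable (fun s => ‖v' s‖^2) volume 0 T) {a b : ℝ}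
    (hsub : Set.uIcc a b ⊆ Set.uIcc 0 T) (j : Fin e) :
    IntervalIntegrable (fun r => (v' r j)^2) volume a b := by
  have h2 := hv2.mono_set hsub
  have hj := comp_ii hv hsub j
  rw [intervalIntegrable_iff] at h2 ⊢
  rw [intervalIntegrable_iff] at hj
  have hsm : AEStronglyMeasurable (fun r => (v' r j)^2)
      (volume.restrict (Set.uIoc a b)) := by
    have := hj.aestronglyMeasurable
    exact this.pow 2
  refine Integrable.mono' h2 hsm (ae_of_all _ (fun r => ?_))
  have h1 : |v' r j| ≤ ‖v' r‖ := norm_le_pi_norm (v' r) j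
  have : (v' r j)^2 ≤ ‖v' r‖^2 := by
    rw [← sq_abs]
    exact pow_le_pow_left₀ (abs_nonneg _) h1 2
  simpa [Real.norm_eq_abs, abs_of_nonneg (sq_nonneg (v' r j))] using this

theorem bdd_meas_ii {f : ℝ → ℝ} (hf : Measurable f) {T M a b : ℝ}
    (hab : Set.uIcc a b ⊆ Set.Icc 0 T) (hM : ∀ r ∈ Set.Icc 0 T, |f r| ≤ M) :
    IntervalIntegrable f volume a b := by
  rw [intervalIntegrable_iff]
  refine Integrable.mono' (g := fun _ => M)
    ((integrableOn_const_iff (C := M)).mpr (Or.inr ?_)) hf.aestronglyMeasurable.restrict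
    ((ae_restrict_iff' measurableSet_uIoc).mpr (ae_of_all _ (fun r hr => ?_)))
  · unfold Set.uIoc; exact measure_Ioc_lt_top
  · exact hM r (hab (Set.uIoc_subset_uIcc hr))

theorem Dstep_measurable {T : ℝ} (m : ℕ) (gv : ℝ → ℝ) :
    Measurable (Dstep T m gv) := by
  have h1 : Measurable (fun r : ℝ => r * 2^m / T) := by fun_prop
  show Measurable ((fun k : ℤ => 2^m/T * VjZ T m gv k) ∘
    (fun r : ℝ => ⌊r * 2^m/T⌋))
  exact measurable_from_top.comp (Int.measurable_floor.comp h1)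


theorem Dstep_bdd {T : ℝ} (hT : 0 < T) (m : ℕ) (gv : ℝ → ℝ) :
    ∃ M : ℝ, 0 ≤ M ∧ ∀ r ∈ Set.Icc (0:ℝ) T, |Dstep T m gv r| ≤ M := by
  have hne : (Finset.Icc (0:ℤ) (2^m)).Nonempty := ⟨0, by simp⟩
  refine ⟨(Finset.Icc (0:ℤ) (2^m)).sup' hne (fun k => |2^m/T * VjZ T m gv k|), ?_, ?_⟩
  · exact (abs_nonneg (2^m/T * VjZ T m gv 0)).trans
      (Finset.le_sup' (fun k => |2^m/T * VjZ T m gv k|) (by simp : (0:ℤ) ∈ Finset.Icc (0:ℤ) (2^m)))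
  · intro r hr
    have h2m : (0:ℝ) < 2^m := by positivity
    have hx0 : (0:ℝ) ≤ r * 2^m / T := div_nonneg (mul_nonneg hr.1 h2m.le) hT.le
    have hk0 : 0 ≤ ⌊r * 2^m / T⌋ := Int.floor_nonneg.2 hx0
    have hk1 : ⌊r * 2^m / T⌋ ≤ 2^m := by
      have h1 : r * 2^m / T ≤ 2^m := by
        rw [div_le_iff₀ hT]
        have := hr.2
        nlinarith
      have h2 : ((⌊r * 2^m / T⌋ : ℤ) : ℝ) ≤ ((2^m : ℤ) : ℝ) := by
        push_cast
        exact (Int.floor_le _).trans h1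
      exact_mod_cast h2
    exact Finset.le_sup' (fun k => |2^m/T * VjZ T m gv k|)
      (Finset.mem_Icc.mpr ⟨hk0, hk1⟩)

theorem Dstep_ii {T : ℝ} (hT : 0 < T) (m : ℕ) (gv : ℝ → ℝ) {a b : ℝ}
    (hab : Set.uIcc a b ⊆ Set.Icc 0 T) :
    IntervalIntegrable (Dstep T m gv) volume a b := by
  obtain ⟨M, _, hM⟩ := Dstep_bdd hT m gv
  exact bdd_meas_ii (Dstep_measurable m gv) hab hM

theorem Dstep_sq_ii {T : ℝ} (hT : 0 < T) (m : ℕ) (gv : ℝ → ℝ) {a b : ℝ}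
    (hab : Set.uIcc a b ⊆ Set.Icc 0 T) :
    IntervalIntegrable (fun r => (Dstep T m gv r)^2) volume a b := by
  obtain ⟨M, hM0, hM⟩ := Dstep_bdd hT m gv
  refine bdd_meas_ii (M := M^2) ((Dstep_measurable m gv).pow_const 2) hab
    (fun r hr => ?_)
  rw [abs_of_nonneg (sq_nonneg _), ← sq_abs]
  have := hM r hr
  nlinarith [abs_nonneg (Dstep T m gv r)]

theorem dptZ_lt_succ {T : ℝ} (hT : 0 < T) (m : ℕ) (k : ℤ) :
    dptZ T m k < dptZ T m (k+1) := by
  have h := dptZ_succ_sub (T := T) m k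
  have : (0:ℝ) < T/2^m := by positivity
  linarith

theorem ae_ne (x : ℝ) : ∀ᵐ r : ℝ ∂volume, r ≠ x := by
  have : volume ({x} : Set ℝ) = 0 := measure_singleton _
  have h := measure_eq_zero_iff_ae_notMem.mp this
  simpa using h

theorem Dstep_cell_ae {T : ℝ} (hT : 0 < T) (m : ℕ) (gv : ℝ → ℝ) (k : ℤ) :
    ∀ᵐ r ∂volume, r ∈ Set.uIoc (dptZ T m k) (dptZ T m (k+1)) →
      Dstep T m gv r = 2^m/T * VjZ T m gv k := by
  filter_upwards [ae_ne (dptZ T m (k+1))] with r hr hrmem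
  rw [Set.uIoc_of_le (dptZ_lt_succ hT m k).le] at hrmem
  have hlt2 : r < dptZ T m (k+1) := lt_of_le_of_ne hrmem.2 hr
  unfold Dstep
  rw [floor_eq_of_mem hT m hrmem.1.le hlt2]

theorem integral_Dstep_cell {T : ℝ} (hT : 0 < T) (m : ℕ) (gv : ℝ → ℝ) (k : ℤ) :
    ∫ r in dptZ T m k..dptZ T m (k+1), Dstep T m gv r = VjZ T m gv k := by
  rw [intervalIntegral.integral_congr_ae (Dstep_cell_ae hT m gv k),
    intervalIntegral.integral_const, smul_eq_mul, dptZ_succ_sub]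
  field_simp

theorem integral_Dstep_sq_cell {T : ℝ} (hT : 0 < T) (m : ℕ) (gv : ℝ → ℝ) (k : ℤ) :
    ∫ r in dptZ T m k..dptZ T m (k+1), (Dstep T m gv r)^2
      = (2^m/T) * (VjZ T m gv k)^2 := by
  have hae : ∀ᵐ r ∂volume, r ∈ Set.uIoc (dptZ T m k) (dptZ T m (k+1)) →
      (Dstep T m gv r)^2 = (2^m/T * VjZ T m gv k)^2 := by
    filter_upwards [Dstep_cell_ae hT m gv k] with r hr hrmem
    rw [hr hrmem]
  rw [intervalIntegral.integral_congr_ae hae,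
    intervalIntegral.integral_const, smul_eq_mul, dptZ_succ_sub]
  field_simp

theorem cell_subset {T : ℝ} (hT : 0 < T) (m : ℕ) {k : ℤ} (hk0 : 0 ≤ k)
    (hk1 : k + 1 ≤ 2^m) :
    Set.uIcc (dptZ T m k) (dptZ T m (k+1)) ⊆ Set.Icc 0 T := by
  rw [Set.uIcc_of_le (dptZ_lt_succ hT m k).le]
  refine Set.Icc_subset_Icc ?_ ?_
  · have : dptZ T m 0 ≤ dptZ T m k := dptZ_mono hT m hk0
    simpa [dptZ] using this
  · have : dptZ T m (k+1) ≤ dptZ T m (2^m) := dptZ_mono hT m hk1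
    have he : dptZ T m (2^m) = T := by
      unfold dptZ
      push_cast
      field_simp
    linarith

theorem cell_bound {T : ℝ} (hT : 0 < T) (m : ℕ) {gv : ℝ → ℝ}
    (hgv : IntervalIntegrable gv volume 0 T)
    (hgv2 : IntervalIntegrable (fun r => (gv r)^2) volume 0 T)
    {k : ℤ} (hk0 : 0 ≤ k) (hk1 : k + 1 ≤ 2^m) :
    (2^m/T) * (VjZ T m gv k)^2
      ≤ ∫ r in dptZ T m k..dptZ T m (k+1), (gv r)^2 := by
  have hsub : Set.uIcc (dptZ T m k) (dptZ T m (k+1)) ⊆ Set.uIcc (0:ℝ) T := by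
    rw [Set.uIcc_of_le hT.le]
    exact cell_subset hT m hk0 hk1
  have h1 : IntervalIntegrable gv volume (dptZ T m k) (dptZ T m (k+1)) :=
    hgv.mono_set hsub
  have h2 : IntervalIntegrable (fun r => (gv r)^2) volume (dptZ T m k)
      (dptZ T m (k+1)) := hgv2.mono_set hsub
  have hle := (dptZ_lt_succ hT m k).le
  have habs : |VjZ T m gv k| ≤
      Real.sqrt (T/2^m) * Real.sqrt (∫ r in dptZ T m k..dptZ T m (k+1), (gv r)^2) := by
    calc |VjZ T m gv k| ≤ ∫ r in dptZ T m k..dptZ T m (k+1), |gv r| :=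
          intervalIntegral.abs_integral_le_integral_abs hle
      _ ≤ _ := by
          have := integral_abs_le_sqrt hle h1 h2
          rwa [dptZ_succ_sub] at this
  have hInn : 0 ≤ ∫ r in dptZ T m k..dptZ T m (k+1), (gv r)^2 :=
    intervalIntegral.integral_nonneg hle (fun x _ => sq_nonneg _)
  have hsq : (VjZ T m gv k)^2 ≤ (T/2^m) * ∫ r in dptZ T m k..dptZ T m (k+1), (gv r)^2 := by
    have := mul_self_le_mul_self (abs_nonneg _) habs
    calc (VjZ T m gv k)^2 = |VjZ T m gv k| * |VjZ T m gv k| := by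
          rw [← abs_mul, abs_mul_self]; ring_nf
      _ ≤ (Real.sqrt (T/2^m) * Real.sqrt _) * (Real.sqrt (T/2^m) * Real.sqrt _) := this
      _ = (T/2^m) * ∫ r in dptZ T m k..dptZ T m (k+1), (gv r)^2 := by
          rw [show ∀ a b : ℝ, (a*b)*(a*b) = (a*a)*(b*b) from fun a b => by ring,
            Real.mul_self_sqrt (by positivity), Real.mul_self_sqrt hInn]
  have h2m : (0:ℝ) < 2^m := by positivity
  calc (2^m/T) * (VjZ T m gv k)^2
      ≤ (2^m/T) * ((T/2^m) * ∫ r in dptZ T m k..dptZ T m (k+1), (gv r)^2) := by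
        apply mul_le_mul_of_nonneg_left hsq (by positivity)
    _ = ∫ r in dptZ T m k..dptZ T m (k+1), (gv r)^2 := by
        field_simp

theorem Dstep_L2 {T : ℝ} (hT : 0 < T) (m : ℕ) {gv : ℝ → ℝ}
    (hgv : IntervalIntegrable gv volume 0 T)
    (hgv2 : IntervalIntegrable (fun r => (gv r)^2) volume 0 T) :
    ∫ r in (0:ℝ)..T, (Dstep T m gv r)^2 ≤ ∫ r in (0:ℝ)..T, (gv r)^2 := by
  set a : ℕ → ℝ := fun n => dptZ T m (n : ℤ) with ha
  have ha0 : a 0 = 0 := by simp [ha, dptZ]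
  have haN : a (2^m) = T := by
    simp only [ha, dptZ]
    push_cast
    field_simp
  have hcast : ∀ n : ℕ, ((n:ℤ) + 1) = ((n+1 : ℕ) : ℤ) := by intro n; push_cast; ring
  have hcell : ∀ n : ℕ, n < 2^m → (0:ℤ) ≤ (n:ℤ) ∧ (n:ℤ) + 1 ≤ 2^m := by
    intro n hn
    constructor
    · exact_mod_cast Nat.zero_le n
    · exact_mod_cast Nat.succ_le_of_lt hn
  have hsubn : ∀ n : ℕ, n < 2^m →
      Set.uIcc (a n) (a (n+1)) ⊆ Set.Icc (0:ℝ) T := by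
    intro n hn
    have := cell_subset hT m (hcell n hn).1 (hcell n hn).2
    rw [show ((n:ℤ)+1) = ((n+1:ℕ):ℤ) from hcast n] at this
    exact this
  have hint1 : ∀ n < 2^m, IntervalIntegrable (fun r => (Dstep T m gv r)^2)
      volume (a n) (a (n+1)) := fun n hn => Dstep_sq_ii hT m gv (hsubn n hn)
  have hint2 : ∀ n < 2^m, IntervalIntegrable (fun r => (gv r)^2)
      volume (a n) (a (n+1)) := by
    intro n hn
    refine hgv2.mono_set ?_
    rw [Set.uIcc_of_le hT.le]
    exact hsubn n hn
  have e1 : ∫ r in (0:ℝ)..T, (Dstep T m gv r)^2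
      = ∑ n ∈ Finset.range (2^m), ∫ r in a n..a (n+1), (Dstep T m gv r)^2 := by
    rw [intervalIntegral.sum_integral_adjacent_intervals hint1, ha0, haN]
  have e2 : ∫ r in (0:ℝ)..T, (gv r)^2
      = ∑ n ∈ Finset.range (2^m), ∫ r in a n..a (n+1), (gv r)^2 := by
    rw [intervalIntegral.sum_integral_adjacent_intervals hint2, ha0, haN]
  rw [e1, e2]
  refine Finset.sum_le_sum (fun n hn => ?_)
  have hn' := Finset.mem_range.mp hn
  have ecell : a (n+1) = dptZ T m ((n:ℤ)+1) := by
    simp only [ha]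
    rw [hcast n]
  rw [ecell]
  calc ∫ r in a n..dptZ T m ((n:ℤ)+1), (Dstep T m gv r)^2
      = (2^m/T) * (VjZ T m gv (n:ℤ))^2 := integral_Dstep_sq_cell hT m gv (n:ℤ)
    _ ≤ ∫ r in dptZ T m (n:ℤ)..dptZ T m ((n:ℤ)+1), (gv r)^2 :=
        cell_bound hT m hgv hgv2 (hcell n hn').1 (hcell n hn').2

theorem hnorm2_nonneg {E : Type*} [NormedAddCommGroup E] (T η : ℝ)
    (ψ : ℝ → ℝ → E) : 0 ≤ hnorm2 T η ψ :=
  Real.iSup_nonneg (fun p => div_nonneg (norm_nonneg _)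
    (Real.rpow_nonneg (sub_nonneg.2 p.2.2.1.le) _))

theorem hnorm2_le_of_forall {E : Type*} [NormedAddCommGroup E] {T η : ℝ}
    {ψ : ℝ → ℝ → E} {M : ℝ} (hM : 0 ≤ M)
    (h : ∀ s t, 0 ≤ s → s < t → t ≤ T → ‖ψ s t‖ ≤ M * (t-s)^η) :
    hnorm2 T η ψ ≤ M := by
  refine Real.iSup_le (fun p => ?_) hM
  obtain ⟨⟨s,t⟩, hs, hst, ht⟩ := p
  have hpos : (0:ℝ) < (t - s)^η := Real.rpow_pos_of_pos (sub_pos.2 hst) _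
  rw [div_le_iff₀ hpos]
  exact h s t hs hst ht

theorem hnormP_nonneg {d : ℕ} (T α : ℝ) (u : ℝ → Fin d → ℝ) :
    0 ≤ hnormP T α u := hnorm2_nonneg _ _ _

theorem holder_le_hnormP {d : ℕ} {T α : ℝ} (hα : 0 < α) {u : ℝ → Fin d → ℝ}
    {Cu : ℝ} (hu : ∀ s t, 0 ≤ s → s ≤ t → t ≤ T → ‖u t - u s‖ ≤ Cu * (t-s)^α) :
    ∀ s t, 0 ≤ s → s ≤ t → t ≤ T → ‖u t - u s‖ ≤ hnormP T α u * (t-s)^α := by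
  intro s t hs hst ht
  rcases eq_or_lt_of_le hst with rfl | hlt
  · simp [Real.zero_rpow hα.ne']
  · have hbdd : BddAbove (Set.range
        (fun p : {p : ℝ × ℝ // 0 ≤ p.1 ∧ p.1 < p.2 ∧ p.2 ≤ T} =>
          ‖(fun s t => u t - u s) p.1.1 p.1.2‖ / (p.1.2 - p.1.1) ^ α)) := by
      refine ⟨max Cu 0, ?_⟩
      rintro x ⟨p, rfl⟩
      obtain ⟨⟨s',t'⟩, hs', hst', ht'⟩ := p
      have hpos : (0:ℝ) < (t' - s')^α := Real.rpow_pos_of_pos (sub_pos.2 hst') _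
      rw [div_le_iff₀ hpos]
      calc ‖u t' - u s'‖ ≤ Cu * (t' - s')^α := hu s' t' hs' hst'.le ht'
        _ ≤ max Cu 0 * (t' - s')^α :=
          mul_le_mul_of_nonneg_right (le_max_left _ _) hpos.le
    have hle : ‖u t - u s‖ / (t - s)^α ≤ hnormP T α u :=
      le_ciSup hbdd (⟨(s,t), hs, hlt, ht⟩ :
        {p : ℝ × ℝ // 0 ≤ p.1 ∧ p.1 < p.2 ∧ p.2 ≤ T})
    have hpos : (0:ℝ) < (t - s)^α := Real.rpow_pos_of_pos (sub_pos.2 hlt) _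
    rw [div_le_iff₀ hpos] at hle
    exact hle

theorem u_contOn {d : ℕ} {T α : ℝ} (hα : 0 < α) {u : ℝ → Fin d → ℝ}
    {Cu : ℝ} (hu : ∀ s t, 0 ≤ s → s ≤ t → t ≤ T → ‖u t - u s‖ ≤ Cu * (t-s)^α)
    (i : Fin d) : ContinuousOn (fun r => u r i) (Set.Icc 0 T) := by
  set C' := max Cu 0 with hC'
  have hC'0 : 0 ≤ C' := le_max_right _ _
  have key : ∀ x ∈ Set.Icc (0:ℝ) T, ∀ y ∈ Set.Icc (0:ℝ) T,
      dist (u x i) (u y i) ≤ C' * (dist x y)^α := by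
    intro x hx y hy
    rcases le_total y x with hyx | hxy
    · have h1 : ‖u x - u y‖ ≤ Cu * (x - y)^α := hu y x hy.1 hyx hx.2
      calc dist (u x i) (u y i) = |u x i - u y i| := Real.dist_eq _ _
        _ ≤ ‖u x - u y‖ := by
            have := norm_le_pi_norm (u x - u y) i
            simpa using this
        _ ≤ Cu * (x - y)^α := h1
        _ ≤ C' * (dist x y)^α := by
            rw [Real.dist_eq, abs_of_nonneg (sub_nonneg.2 hyx)]
            exact mul_le_mul_of_nonneg_right (le_max_left _ _)
              (Real.rpow_nonneg (sub_nonneg.2 hyx) _)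
    · have h1 : ‖u y - u x‖ ≤ Cu * (y - x)^α := hu x y hx.1 hxy hy.2
      calc dist (u x i) (u y i) = |u y i - u x i| := by
            rw [dist_comm]; exact Real.dist_eq _ _
        _ ≤ ‖u y - u x‖ := by
            have := norm_le_pi_norm (u y - u x) i
            simpa using this
        _ ≤ Cu * (y - x)^α := h1
        _ ≤ C' * (dist x y)^α := by
            rw [dist_comm, Real.dist_eq, abs_of_nonneg (sub_nonneg.2 hxy)]
            exact mul_le_mul_of_nonneg_right (le_max_left _ _)
              (Real.rpow_nonneg (sub_nonneg.2 hxy) _)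
  have hold : HolderOnWith C'.toNNReal α.toNNReal (fun r => u r i)
      (Set.Icc 0 T) := by
    intro x hx y hy
    rw [edist_dist, edist_dist]
    calc ENNReal.ofReal (dist (u x i) (u y i))
        ≤ ENNReal.ofReal (C' * (dist x y)^α) :=
          ENNReal.ofReal_le_ofReal (key x hx y hy)
      _ = ENNReal.ofReal C' * ENNReal.ofReal ((dist x y)^α) := by
          rw [ENNReal.ofReal_mul hC'0]
      _ = ↑C'.toNNReal * ENNReal.ofReal (dist x y) ^ (α.toNNReal : ℝ) := by
          rw [← ENNReal.ofReal_rpow_of_nonneg dist_nonneg hα.le]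
          rw [Real.coe_toNNReal α hα.le]
          rfl
  exact hold.continuousOn (by simpa using hα)

theorem crossIm_eq {d e : ℕ} {T : ℝ} (hT : 0 < T) (m : ℕ) (u : ℝ → Fin d → ℝ)
    {v' : ℝ → Fin e → ℝ} (hv : IntervalIntegrable v' volume 0 T)
    {s t : ℝ} (hs : 0 ≤ s) (hst : s ≤ t) (ht : t ≤ T) (i : Fin d) (j : Fin e) :
    crossIm T m u v' s t i j
      = ∫ r in s..t, (u r i - u s i) * Dstep T m (fun r => v' r j) r := by
  refine intervalIntegral.integral_congr_ae ?_
  have hS : volume (⋃ z : ℤ, {((z:ℝ) * T / 2^m)}) = 0 :=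
    measure_iUnion_null (fun z => measure_singleton _)
  filter_upwards [measure_eq_zero_iff_ae_notMem.mp hS] with r hr hrmem
  have h2m : (0:ℝ) < 2^m := by positivity
  have hrne : r * 2^m / T ≠ ((⌊r * 2^m/T⌋:ℤ):ℝ) := by
    intro hcontra
    apply hr
    refine Set.mem_iUnion.2 ⟨⌊r * 2^m/T⌋, Set.mem_singleton_iff.2 ?_⟩
    have : r = (r * 2^m / T) * T / 2^m := by field_simp
    conv_lhs => rw [this, hcontra]
  have hr0T : 0 ≤ r ∧ r ≤ T := by
    rw [Set.uIoc_of_le hst] at hrmem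
    exact ⟨hs.trans hrmem.1.le, hrmem.2.trans ht⟩
  have hrT : r < T := by
    rcases lt_or_eq_of_le hr0T.2 with h | h
    · exact h
    · exfalso
      apply hrne
      rw [h]
      have e1 : T * 2^m / T = (2:ℝ)^m := by field_simp
      rw [e1]
      have : ((2:ℝ)^m) = (((2^m : ℤ)):ℝ) := by push_cast; ring
      rw [this, Int.floor_intCast]
  congr 1
  rw [deriv_pwl hT m (antider v') j hrne]
  set k := ⌊r * 2^m/T⌋ with hk
  have hx0 : (0:ℝ) ≤ r * 2^m / T := div_nonneg (mul_nonneg hr0T.1 h2m.le) hT.le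
  have hk0 : 0 ≤ k := Int.floor_nonneg.2 hx0
  have hk1 : k + 1 ≤ 2^m := by
    have h1 : r * 2^m / T < 2^m := by
      rw [div_lt_iff₀ hT]
      nlinarith
    have h2 : (k:ℝ) < ((2^m : ℤ):ℝ) := by
      push_cast
      exact (Int.floor_le _).trans_lt h1
    have : k < 2^m := by exact_mod_cast h2
    omega
  have hsub := cell_subset hT m hk0 hk1
  have h0k : (0:ℝ) ≤ dptZ T m k :=
    (hsub (Set.left_mem_uIcc)).1
  have hkk : dptZ T m k ≤ dptZ T m (k+1) := (dptZ_lt_succ hT m k).le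
  have hk1T : dptZ T m (k+1) ≤ T := (hsub (Set.right_mem_uIcc)).2
  have hkT : dptZ T m k ≤ T := hkk.trans hk1T
  rw [antider_apply hv (h0k.trans hkk) hk1T j, antider_apply hv h0k hkT j]
  have hsub1 : Set.uIcc (0:ℝ) (dptZ T m k) ⊆ Set.uIcc (0:ℝ) T := by
    rw [Set.uIcc_of_le h0k, Set.uIcc_of_le hT.le]
    exact Set.Icc_subset_Icc le_rfl hkT
  have hsub2 : Set.uIcc (dptZ T m k) (dptZ T m (k+1)) ⊆ Set.uIcc (0:ℝ) T := by
    rw [Set.uIcc_of_le hT.le]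
    exact hsub
  have hadd := intervalIntegral.integral_add_adjacent_intervals
    (comp_ii hv hsub1 j) (comp_ii hv hsub2 j)
  show (2:ℝ)^m/T * (_ - _) = Dstep T m (fun r => v' r j) r
  unfold Dstep VjZ
  rw [← hk, ← hadd]
  ring

theorem uIcc_sub_Icc {a b T : ℝ} (h0 : 0 ≤ a) (hab : a ≤ b) (hbT : b ≤ T) :
    Set.uIcc a b ⊆ Set.Icc 0 T := by
  rw [Set.uIcc_of_le hab]
  exact Set.Icc_subset_Icc h0 hbT

theorem uIcc_sub_uIcc {a b T : ℝ} (h0 : 0 ≤ a) (hab : a ≤ b) (hbT : b ≤ T) :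
    Set.uIcc a b ⊆ Set.uIcc 0 T := by
  rw [Set.uIcc_of_le hab, Set.uIcc_of_le (h0.trans (hab.trans hbT))]
  exact Set.Icc_subset_Icc h0 hbT

theorem sq_int_le_L2 {e : ℕ} {T : ℝ} (hT : 0 < T) {v' : ℝ → Fin e → ℝ}
    (hv : IntervalIntegrable v' volume 0 T)
    (hv2 : IntervalIntegrable (fun s => ‖v' s‖^2) volume 0 T)
    {a b : ℝ} (h0 : 0 ≤ a) (hab : a ≤ b) (hbT : b ≤ T) (j : Fin e) :
    ∫ r in a..b, (v' r j)^2 ≤ ∫ r in (0:ℝ)..T, ‖v' r‖^2 := by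
  have hii : IntervalIntegrable (fun r => (v' r j)^2) volume 0 T :=
    comp_sq_ii hv hv2 (le_refl _) j
  calc ∫ r in a..b, (v' r j)^2 ≤ ∫ r in (0:ℝ)..T, (v' r j)^2 :=
        intervalIntegral.integral_mono_interval h0 hab hbT
          (Filter.Eventually.of_forall (fun x => sq_nonneg _)) hii
    _ ≤ ∫ r in (0:ℝ)..T, ‖v' r‖^2 := by
        refine intervalIntegral.integral_mono_on hT.le hii hv2 (fun x _ => ?_)
        have h1 : |v' x j| ≤ ‖v' x‖ := norm_le_pi_norm (v' x) j
        rw [← sq_abs]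
        exact pow_le_pow_left₀ (abs_nonneg _) h1 2

theorem Dsq_int_le_L2 {e : ℕ} {T : ℝ} (hT : 0 < T) (m : ℕ)
    {v' : ℝ → Fin e → ℝ}
    (hv : IntervalIntegrable v' volume 0 T)
    (hv2 : IntervalIntegrable (fun s => ‖v' s‖^2) volume 0 T)
    {a b : ℝ} (h0 : 0 ≤ a) (hab : a ≤ b) (hbT : b ≤ T) (j : Fin e) :
    ∫ r in a..b, (Dstep T m (fun r => v' r j) r)^2
      ≤ ∫ r in (0:ℝ)..T, ‖v' r‖^2 := by
  calc ∫ r in a..b, (Dstep T m (fun r => v' r j) r)^2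
      ≤ ∫ r in (0:ℝ)..T, (Dstep T m (fun r => v' r j) r)^2 :=
        intervalIntegral.integral_mono_interval h0 hab hbT
          (Filter.Eventually.of_forall (fun x => sq_nonneg _))
          (Dstep_sq_ii hT m _ (uIcc_sub_Icc le_rfl hT.le le_rfl))
    _ ≤ ∫ r in (0:ℝ)..T, (v' r j)^2 :=
        Dstep_L2 hT m (comp_ii hv (le_refl _) j) (comp_sq_ii hv hv2 (le_refl _) j)
    _ ≤ ∫ r in (0:ℝ)..T, ‖v' r‖^2 := sq_int_le_L2 hT hv hv2 le_rfl hT.le le_rfl j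

theorem g_ii {e : ℕ} {T : ℝ} (hT : 0 < T) (m : ℕ) {v' : ℝ → Fin e → ℝ}
    (hv : IntervalIntegrable v' volume 0 T)
    {a b : ℝ} (h0 : 0 ≤ a) (hab : a ≤ b) (hbT : b ≤ T) (j : Fin e) :
    IntervalIntegrable
      (fun r => Dstep T m (fun r => v' r j) r - v' r j) volume a b :=
  (Dstep_ii hT m _ (uIcc_sub_Icc h0 hab hbT)).sub
    (comp_ii hv (uIcc_sub_uIcc h0 hab hbT) j)

theorem g_sq_ii {e : ℕ} {T : ℝ} (hT : 0 < T) (m : ℕ) {v' : ℝ → Fin e → ℝ}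
    (hv : IntervalIntegrable v' volume 0 T)
    (hv2 : IntervalIntegrable (fun s => ‖v' s‖^2) volume 0 T)
    {a b : ℝ} (h0 : 0 ≤ a) (hab : a ≤ b) (hbT : b ≤ T) (j : Fin e) :
    IntervalIntegrable
      (fun r => (Dstep T m (fun r => v' r j) r - v' r j)^2) volume a b := by
  have hgii := g_ii hT m hv h0 hab hbT j
  have hdom : IntervalIntegrable
      (fun r => 2*(Dstep T m (fun r => v' r j) r)^2 + 2*(v' r j)^2) volume a b :=
    ((Dstep_sq_ii hT m _ (uIcc_sub_Icc h0 hab hbT)).const_mul 2).add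
      ((comp_sq_ii hv hv2 (uIcc_sub_uIcc h0 hab hbT) j).const_mul 2)
  rw [intervalIntegrable_iff] at hgii hdom ⊢
  have hsm : AEStronglyMeasurable
      (fun r => (Dstep T m (fun r => v' r j) r - v' r j)^2)
      (volume.restrict (Set.uIoc a b)) := by
    have := hgii.aestronglyMeasurable
    exact this.pow 2
  refine Integrable.mono' hdom hsm (ae_of_all _ (fun r => ?_))
  rw [Real.norm_eq_abs, abs_of_nonneg (sq_nonneg _)]
  nlinarith [sq_nonneg (Dstep T m (fun r => v' r j) r + v' r j)]

theorem g_sq_le {e : ℕ} {T : ℝ} (hT : 0 < T) (m : ℕ) {v' : ℝ → Fin e → ℝ}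
    (hv : IntervalIntegrable v' volume 0 T)
    (hv2 : IntervalIntegrable (fun s => ‖v' s‖^2) volume 0 T)
    {a b : ℝ} (h0 : 0 ≤ a) (hab : a ≤ b) (hbT : b ≤ T) (j : Fin e) :
    ∫ r in a..b, (Dstep T m (fun r => v' r j) r - v' r j)^2
      ≤ 4 * ∫ r in (0:ℝ)..T, ‖v' r‖^2 := by
  have h1 : ∫ r in a..b, (Dstep T m (fun r => v' r j) r - v' r j)^2
      ≤ ∫ r in a..b, (2*(Dstep T m (fun r => v' r j) r)^2 + 2*(v' r j)^2) := by
    refine intervalIntegral.integral_mono_on hab (g_sq_ii hT m hv hv2 h0 hab hbT j)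
      (((Dstep_sq_ii hT m _ (uIcc_sub_Icc h0 hab hbT)).const_mul 2).add
        ((comp_sq_ii hv hv2 (uIcc_sub_uIcc h0 hab hbT) j).const_mul 2))
      (fun x _ => ?_)
    nlinarith [sq_nonneg (Dstep T m (fun r => v' r j) x + v' x j)]
  have h2 : ∫ r in a..b, (2*(Dstep T m (fun r => v' r j) r)^2 + 2*(v' r j)^2)
      = 2 * (∫ r in a..b, (Dstep T m (fun r => v' r j) r)^2)
        + 2 * ∫ r in a..b, (v' r j)^2 := by
    rw [intervalIntegral.integral_add
      ((Dstep_sq_ii hT m _ (uIcc_sub_Icc h0 hab hbT)).const_mul 2)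
      ((comp_sq_ii hv hv2 (uIcc_sub_uIcc h0 hab hbT) j).const_mul 2),
      intervalIntegral.integral_const_mul, intervalIntegral.integral_const_mul]
  have h3 := Dsq_int_le_L2 hT m hv hv2 h0 hab hbT j
  have h4 := sq_int_le_L2 hT hv hv2 h0 hab hbT j
  linarith

theorem g_cell_zero {e : ℕ} {T : ℝ} (hT : 0 < T) (m : ℕ) {v' : ℝ → Fin e → ℝ}
    (hv : IntervalIntegrable v' volume 0 T)
    {k : ℤ} (hk0 : 0 ≤ k) (hk1 : k + 1 ≤ 2^m) (j : Fin e) :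
    ∫ r in dptZ T m k..dptZ T m (k+1),
      (Dstep T m (fun r => v' r j) r - v' r j) = 0 := by
  have hsub := cell_subset hT m hk0 hk1
  have h0k : (0:ℝ) ≤ dptZ T m k := (hsub Set.left_mem_uIcc).1
  have hkk := (dptZ_lt_succ hT m k).le
  have hk1T : dptZ T m (k+1) ≤ T := (hsub Set.right_mem_uIcc).2
  rw [intervalIntegral.integral_sub (Dstep_ii hT m _ hsub)
    (comp_ii hv (uIcc_sub_uIcc h0k hkk hk1T) j)]
  rw [integral_Dstep_cell hT m _ k]
  show VjZ T m (fun r => v' r j) k - VjZ T m (fun r => v' r j) k = 0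
  ring

/-- Generic A-type estimate over `[a,b] ⊆ [0,T]` with base point `c`. -/
theorem est_A {d : ℕ} {T α : ℝ} (hα : 0 < α) {u : ℝ → Fin d → ℝ} {Cu : ℝ}
    (hu : ∀ s t, 0 ≤ s → s ≤ t → t ≤ T → ‖u t - u s‖ ≤ Cu * (t-s)^α)
    {g : ℝ → ℝ} {a b c C : ℝ}
    (h0c : 0 ≤ c) (hca : c ≤ a) (hab : a ≤ b) (hbT : b ≤ T)
    (hC : ∀ r ∈ Set.Icc a b, hnormP T α u * (r - c)^α ≤ C) (hC0 : 0 ≤ C)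
    (i : Fin d)
    (hg : IntervalIntegrable g volume a b)
    (hg2 : IntervalIntegrable (fun x => (g x)^2) volume a b) :
    |∫ r in a..b, (u r i - u c i) * g r|
      ≤ C * (Real.sqrt (b-a) * Real.sqrt (∫ x in a..b, (g x)^2)) := by
  refine est_piece hab hC0 (fun r hr => ?_) ?_ hg hg2
  · have h1 : |u r i - u c i| ≤ ‖u r - u c‖ := by
      have := norm_le_pi_norm (u r - u c) i
      simpa using this
    have h2 : ‖u r - u c‖ ≤ hnormP T α u * (r - c)^α :=
      holder_le_hnormP hα hu c r h0c (hca.trans hr.1) (hr.2.trans hbT)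
    exact h1.trans (h2.trans (hC r hr))
  · refine ContinuousOn.sub ?_ continuousOn_const
    exact (u_contOn hα hu i).mono
      (Set.Icc_subset_Icc (h0c.trans hca) hbT)

set_option maxHeartbeats 1000000 in
theorem est_B {d e : ℕ} {T α : ℝ} (hT : 0 < T) (hα1 : 0 < α) (hα2 : α < 1/2)
    {u : ℝ → Fin d → ℝ} {Cu : ℝ}
    (hu : ∀ s t, 0 ≤ s → s ≤ t → t ≤ T → ‖u t - u s‖ ≤ Cu * (t-s)^α)
    {v' : ℝ → Fin e → ℝ}
    (hv : IntervalIntegrable v' volume 0 T)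
    (hv2 : IntervalIntegrable (fun s => ‖v' s‖^2) volume 0 T)
    (m : ℕ) {s t : ℝ} (hs : 0 ≤ s) (hst : s < t) (ht : t ≤ T)
    (i : Fin d) (j : Fin e) :
    |∫ r in s..t, (u r i - u s i) * (Dstep T m (fun r => v' r j) r - v' r j)|
      ≤ 4 * hnormP T α u * ((T/2^m)^α * Real.sqrt (t-s)) *
        Real.sqrt (∫ r in s..t, (Dstep T m (fun r => v' r j) r - v' r j)^2) := by
  have h2m : (0:ℝ) < 2^m := by positivity
  set δ := T/2^m with hδdef
  have hδ : 0 < δ := by positivity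
  set gg : ℝ → ℝ := fun r => Dstep T m (fun r => v' r j) r - v' r j with hggdef
  set G := Real.sqrt (∫ r in s..t, (gg r)^2) with hGdef
  have hG0 : 0 ≤ G := Real.sqrt_nonneg _
  set Hu := hnormP T α u with hHudef
  have hHu0 : 0 ≤ Hu := hnormP_nonneg _ _ _
  have hts0 : (0:ℝ) ≤ t - s := by linarith
  have hδα : (0:ℝ) ≤ δ^α := Real.rpow_nonneg hδ.le _
  have htsα : (0:ℝ) ≤ (t-s)^α := Real.rpow_nonneg hts0 _
  have hHδ : (0:ℝ) ≤ Hu*δ^α := mul_nonneg hHu0 hδα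
  have hHts : (0:ℝ) ≤ Hu*(t-s)^α := mul_nonneg hHu0 htsα
  have hGsq : ∫ r in s..t, (gg r)^2 ≥ 0 :=
    intervalIntegral.integral_nonneg hst.le (fun x _ => sq_nonneg _)
  have hucont : ∀ a b : ℝ, 0 ≤ a → b ≤ T →
      ContinuousOn (fun r => u r i - u a i) (Set.Icc a b) := by
    intro a b h0 hb
    exact ((u_contOn hα1 hu i).mono (Set.Icc_subset_Icc h0 hb)).sub
      continuousOn_const
  -- case distinction
  rcases le_or_gt (t-s) (2*δ) with hcase | hcase
  · -- short interval
    have hbd := est_A hα1 hu (g := gg) (a := s) (b := t) (c := s) hs le_rfl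
      hst.le ht (C := Hu*(t-s)^α)
      (fun r hr => mul_le_mul_of_nonneg_left
        (Real.rpow_le_rpow (sub_nonneg.2 hr.1) (by linarith [hr.2]) hα1.le) hHu0)
      (by positivity) i (g_ii hT m hv hs hst.le ht j)
      (g_sq_ii hT m hv hv2 hs hst.le ht j)
    have e1 : (t-s)^α ≤ 2*δ^α := by
      calc (t-s)^α ≤ (2*δ)^α :=
            Real.rpow_le_rpow (by linarith) hcase hα1.le
        _ = 2^α * δ^α := Real.mul_rpow (by norm_num) hδ.le
        _ ≤ 2*δ^α := by
            refine mul_le_mul_of_nonneg_right ?_ (Real.rpow_nonneg hδ.le _)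
            calc (2:ℝ)^α ≤ 2^(1:ℝ) :=
                  Real.rpow_le_rpow_of_exponent_le one_le_two (by linarith)
              _ = 2 := Real.rpow_one 2
    calc |∫ r in s..t, (u r i - u s i) * gg r|
        ≤ Hu*(t-s)^α * (Real.sqrt (t-s) * G) := hbd
      _ ≤ Hu*(2*δ^α) * (Real.sqrt (t-s) * G) := by
          refine mul_le_mul_of_nonneg_right ?_
            (mul_nonneg (Real.sqrt_nonneg _) hG0)
          exact mul_le_mul_of_nonneg_left e1 hHu0
      _ ≤ 4 * Hu * (δ^α * Real.sqrt (t-s)) * G := by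
          nlinarith [mul_nonneg (mul_nonneg hHu0 (mul_nonneg hδα (Real.sqrt_nonneg (t-s)))) hG0]
  · -- long interval: dyadic decomposition
    set k0 := ⌈s * 2^m/T⌉ with hk0def
    set k1 := ⌊t * 2^m/T⌋ with hk1def
    set a' := dptZ T m k0 with ha'def
    set b' := dptZ T m k1 with hb'def
    have hxs : s*2^m/T*T = s*2^m := by field_simp
    have hδ2 : δ*2^m = T := by rw [hδdef]; field_simp
    have hsa : s ≤ a' := by
      rw [ha'def]; unfold dptZ
      rw [le_div_iff₀ h2m]
      have hc := Int.le_ceil (s*2^m/T)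
      rw [div_le_iff₀ hT] at hc
      linarith
    have haδ : a' ≤ s + δ := by
      rw [ha'def]; unfold dptZ
      rw [div_le_iff₀ h2m]
      have hc := Int.ceil_lt_add_one (s*2^m/T)
      have := mul_le_mul_of_nonneg_right hc.le hT.le
      nlinarith
    have hbt : b' ≤ t := floor_pt_le hT m t
    have htb : t ≤ b' + δ := by
      have h1 := lt_floor_pt_succ hT m t
      have h2 := dptZ_succ_sub (T := T) m k1
      rw [hb'def, hδdef]
      linarith
    have hab' : a' ≤ b' := by linarith
    have hk01 : k0 ≤ k1 := by
      by_contra hcon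
      push_neg at hcon
      have h1 : k1 + 1 ≤ k0 := hcon
      have h2 : dptZ T m (k1+1) ≤ dptZ T m k0 := dptZ_mono hT m h1
      have h3 := dptZ_succ_sub (T := T) m k1
      have hb'eq : b' = dptZ T m k1 := hb'def
      have ha'eq : a' = dptZ T m k0 := ha'def
      linarith
    have hk00 : 0 ≤ k0 :=
      Int.ceil_nonneg (div_nonneg (mul_nonneg hs h2m.le) hT.le)
    have hk1le : k1 ≤ 2^m := by
      have h1 : t*2^m/T ≤ (((2:ℤ)^m : ℤ):ℝ) := by
        push_cast
        rw [div_le_iff₀ hT]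
        nlinarith
      have h2 := Int.floor_le_floor h1
      rwa [Int.floor_intCast] at h2
    set n := (k1 - k0).toNat with hndef
    have hncast : (n:ℤ) = k1 - k0 := Int.toNat_of_nonneg (sub_nonneg.2 hk01)
    set aseq : ℕ → ℝ := fun p => dptZ T m (k0 + p) with haseqdef
    have haseq0 : aseq 0 = a' := by simp [haseqdef, ha'def]
    have haseqn : aseq n = b' := by
      have : k0 + (n:ℤ) = k1 := by omega
      simp only [haseqdef, hb'def, this]
    have haseq_mono : ∀ p q : ℕ, p ≤ q → aseq p ≤ aseq q := by
      intro p q h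
      exact dptZ_mono hT m (by omega)
    have haseq_succ : ∀ p : ℕ, aseq (p+1) = dptZ T m ((k0 + p) + 1) := by
      intro p
      simp only [haseqdef]
      congr 1
      push_cast
      ring
    have haseq_width : ∀ p : ℕ, aseq (p+1) - aseq p = δ := by
      intro p
      rw [haseq_succ p, hδdef]
      exact dptZ_succ_sub m _
    have haseq_le_t : ∀ p : ℕ, p ≤ n → aseq p ≤ t := by
      intro p hp
      exact (haseq_mono p n hp).trans (haseqn ▸ hbt)
    have hs_le_aseq : ∀ p : ℕ, s ≤ aseq p := by
      intro p
      exact hsa.trans (haseq0 ▸ haseq_mono 0 p (Nat.zero_le p))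
    -- integrability of the full integrand on subintervals of [s,t]
    have hFii : ∀ a b : ℝ, s ≤ a → a ≤ b → b ≤ t →
        IntervalIntegrable (fun r => (u r i - u s i) * gg r) volume a b := by
      intro a b h1 h2 h3
      refine (g_ii hT m hv (hs.trans h1) h2 (h3.trans ht) j).continuousOn_mul ?_
      rw [Set.uIcc_of_le h2]
      exact ((u_contOn hα1 hu i).mono
        (Set.Icc_subset_Icc (hs.trans h1) (h3.trans ht))).sub continuousOn_const
    have ha't : a' ≤ t := hab'.trans hbt
    have hsp1 : ∫ r in s..t, (u r i - u s i) * gg r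
        = (∫ r in s..a', (u r i - u s i) * gg r)
          + ∫ r in a'..t, (u r i - u s i) * gg r :=
      (intervalIntegral.integral_add_adjacent_intervals
        (hFii s a' le_rfl hsa ha't) (hFii a' t hsa ha't le_rfl)).symm
    have hsp2 : ∫ r in a'..t, (u r i - u s i) * gg r
        = (∫ r in a'..b', (u r i - u s i) * gg r)
          + ∫ r in b'..t, (u r i - u s i) * gg r :=
      (intervalIntegral.integral_add_adjacent_intervals
        (hFii a' b' hsa hab' hbt) (hFii b' t (hsa.trans hab') hbt le_rfl)).symm
    have hsum : ∫ r in a'..b', (u r i - u s i) * gg r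
        = ∑ p ∈ Finset.range n, ∫ r in aseq p..aseq (p+1),
            (u r i - u s i) * gg r := by
      rw [intervalIntegral.sum_integral_adjacent_intervals
        (fun p hp => hFii _ _ (hs_le_aseq p) (haseq_mono p (p+1) (Nat.le_succ p))
          (haseq_le_t (p+1) hp)), haseq0, haseqn]
    -- cell estimates
    set x : ℕ → ℝ := fun p => ∫ r in aseq p..aseq (p+1), (gg r)^2 with hxdef
    have hx0 : ∀ p, 0 ≤ x p := fun p =>
      intervalIntegral.integral_nonneg (haseq_mono p (p+1) (Nat.le_succ p))
        (fun r _ => sq_nonneg _)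
    have hcell : ∀ p, p < n → |∫ r in aseq p..aseq (p+1), (u r i - u s i) * gg r|
        ≤ Hu*δ^α * (Real.sqrt δ * Real.sqrt (x p)) := by
      intro p hp
      have hple : aseq p ≤ aseq (p+1) := haseq_mono p (p+1) (Nat.le_succ p)
      have h0p : 0 ≤ aseq p := hs.trans (hs_le_aseq p)
      have hp1T : aseq (p+1) ≤ T := (haseq_le_t (p+1) hp).trans ht
      have hk0p : (0:ℤ) ≤ k0 + p := by omega
      have hk1p : (k0 + p) + 1 ≤ 2^m := by omega
      have hzero : ∫ r in aseq p..aseq (p+1), gg r = 0 := by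
        rw [haseq_succ p]
        show ∫ r in dptZ T m (k0+p)..dptZ T m ((k0+p)+1), gg r = 0
        exact g_cell_zero hT m hv hk0p hk1p j
      have hdec : ∫ r in aseq p..aseq (p+1), (u r i - u s i) * gg r
          = ∫ r in aseq p..aseq (p+1), (u r i - u (aseq p) i) * gg r := by
        have int1 : IntervalIntegrable
            (fun r => (u r i - u (aseq p) i) * gg r) volume (aseq p) (aseq (p+1)) := by
          refine (g_ii hT m hv h0p hple hp1T j).continuousOn_mul ?_
          rw [Set.uIcc_of_le hple]
          exact hucont (aseq p) (aseq (p+1)) h0p hp1T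
        have int2 : IntervalIntegrable
            (fun r => (u (aseq p) i - u s i) * gg r) volume (aseq p) (aseq (p+1)) :=
          (g_ii hT m hv h0p hple hp1T j).const_mul _
        have e1 : ∫ r in aseq p..aseq (p+1), (u r i - u s i) * gg r
            = (∫ r in aseq p..aseq (p+1), (u r i - u (aseq p) i) * gg r)
              + ∫ r in aseq p..aseq (p+1), (u (aseq p) i - u s i) * gg r := by
          rw [← intervalIntegral.integral_add int1 int2]
          exact intervalIntegral.integral_congr (fun r _ => by ring)
        rw [e1, intervalIntegral.integral_const_mul, hzero, mul_zero, add_zero]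
      rw [hdec]
      have hbd := est_A hα1 hu (g := gg) (a := aseq p) (b := aseq (p+1))
        (c := aseq p) h0p le_rfl hple hp1T (C := Hu*δ^α)
        (fun r hr => by
          refine mul_le_mul_of_nonneg_left ?_ hHu0
          refine Real.rpow_le_rpow (sub_nonneg.2 hr.1) ?_ hα1.le
          have := hr.2
          have hw := haseq_width p
          linarith)
        hHδ i
        (g_ii hT m hv h0p hple hp1T j) (g_sq_ii hT m hv hv2 h0p hple hp1T j)
      rwa [haseq_width p] at hbd
    -- sum the cells
    have hxsum : ∑ p ∈ Finset.range n, x p = ∫ r in a'..b', (gg r)^2 := by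
      rw [intervalIntegral.sum_integral_adjacent_intervals
        (fun p hp => g_sq_ii hT m hv hv2 (hs.trans (hs_le_aseq p))
          (haseq_mono p (p+1) (Nat.le_succ p))
          ((haseq_le_t (p+1) hp).trans ht) j), haseq0, haseqn]
    have hxsum_le : ∑ p ∈ Finset.range n, x p ≤ ∫ r in s..t, (gg r)^2 := by
      rw [hxsum]
      exact intervalIntegral.integral_mono_interval hsa hab' hbt
        (Filter.Eventually.of_forall (fun r => sq_nonneg _))
        (g_sq_ii hT m hv hv2 hs hst.le ht j)
    have hnδ : (n:ℝ)*δ ≤ t - s := by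
      have e1 : b' - a' = ((k1:ℝ) - (k0:ℝ))*δ := by
        rw [hb'def, ha'def, hδdef]
        unfold dptZ
        field_simp
      have e2 : (n:ℝ) = (k1:ℝ) - (k0:ℝ) := by exact_mod_cast hncast
      calc (n:ℝ)*δ = ((k1:ℝ) - (k0:ℝ))*δ := by rw [e2]
        _ = b' - a' := e1.symm
        _ ≤ t - s := by linarith
    have hI2 : |∑ p ∈ Finset.range n, ∫ r in aseq p..aseq (p+1),
          (u r i - u s i) * gg r|
        ≤ Hu*δ^α * (Real.sqrt (t-s) * G) := by
      calc |∑ p ∈ Finset.range n, ∫ r in aseq p..aseq (p+1), (u r i - u s i) * gg r|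
          ≤ ∑ p ∈ Finset.range n, |∫ r in aseq p..aseq (p+1), (u r i - u s i) * gg r| :=
            Finset.abs_sum_le_sum_abs _ _
        _ ≤ ∑ p ∈ Finset.range n, Hu*δ^α * (Real.sqrt δ * Real.sqrt (x p)) :=
            Finset.sum_le_sum (fun p hp => hcell p (Finset.mem_range.mp hp))
        _ = Hu*δ^α * Real.sqrt δ * ∑ p ∈ Finset.range n, Real.sqrt (x p) := by
            rw [Finset.mul_sum]
            refine Finset.sum_congr rfl (fun p _ => by ring)
        _ ≤ Hu*δ^α * Real.sqrt δ * (Real.sqrt n * Real.sqrt (∑ p ∈ Finset.range n, x p)) := by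
            refine mul_le_mul_of_nonneg_left (sum_sqrt_le hx0) ?_
            exact mul_nonneg hHδ (Real.sqrt_nonneg _)
        _ ≤ Hu*δ^α * (Real.sqrt (t-s) * G) := by
            have h1 : Real.sqrt δ * Real.sqrt n ≤ Real.sqrt (t-s) := by
              rw [← Real.sqrt_mul hδ.le]
              refine Real.sqrt_le_sqrt ?_
              calc δ * n = (n:ℝ)*δ := by ring
                _ ≤ t - s := hnδ
            have h2 : Real.sqrt (∑ p ∈ Finset.range n, x p) ≤ G := by
              rw [hGdef]
              exact Real.sqrt_le_sqrt hxsum_le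
            calc Hu*δ^α * Real.sqrt δ * (Real.sqrt n * Real.sqrt (∑ p ∈ Finset.range n, x p))
                = Hu*δ^α * ((Real.sqrt δ * Real.sqrt n) * Real.sqrt (∑ p ∈ Finset.range n, x p)) := by ring
              _ ≤ Hu*δ^α * (Real.sqrt (t-s) * G) := by
                  refine mul_le_mul_of_nonneg_left ?_ hHδ
                  exact mul_le_mul h1 h2 (Real.sqrt_nonneg _) (Real.sqrt_nonneg _)
    -- I1
    have hsub_sq : ∀ a b : ℝ, s ≤ a → a ≤ b → b ≤ t →
        Real.sqrt (∫ r in a..b, (gg r)^2) ≤ G := by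
      intro a b h1 h2 h3
      rw [hGdef]
      refine Real.sqrt_le_sqrt ?_
      exact intervalIntegral.integral_mono_interval h1 h2 h3
        (Filter.Eventually.of_forall (fun r => sq_nonneg _))
        (g_sq_ii hT m hv hv2 hs hst.le ht j)
    have hI1 : |∫ r in s..a', (u r i - u s i) * gg r|
        ≤ Hu*δ^α * (Real.sqrt (t-s) * G) := by
      have hbd := est_A hα1 hu (g := gg) (a := s) (b := a') (c := s)
        hs le_rfl hsa (ha't.trans ht) (C := Hu*δ^α)
        (fun r hr => by
          refine mul_le_mul_of_nonneg_left ?_ hHu0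
          refine Real.rpow_le_rpow (sub_nonneg.2 hr.1) ?_ hα1.le
          have := hr.2
          linarith)
        hHδ i
        (g_ii hT m hv hs hsa (ha't.trans ht) j)
        (g_sq_ii hT m hv hv2 hs hsa (ha't.trans ht) j)
      refine hbd.trans ?_
      refine mul_le_mul_of_nonneg_left ?_ hHδ
      refine mul_le_mul (Real.sqrt_le_sqrt (by linarith))
        (hsub_sq s a' le_rfl hsa ha't) (Real.sqrt_nonneg _) (Real.sqrt_nonneg _)
    -- I3
    have hI3 : |∫ r in b'..t, (u r i - u s i) * gg r|
        ≤ Hu*δ^α * (Real.sqrt (t-s) * G) := by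
      have hbd := est_A hα1 hu (g := gg) (a := b') (b := t) (c := s)
        hs (hsa.trans hab') hbt ht (C := Hu*(t-s)^α)
        (fun r hr => by
          refine mul_le_mul_of_nonneg_left ?_ hHu0
          exact Real.rpow_le_rpow (sub_nonneg.2 ((hsa.trans hab').trans hr.1))
            (by linarith [hr.2]) hα1.le)
        hHts i
        (g_ii hT m hv (hs.trans (hsa.trans hab')) hbt ht j)
        (g_sq_ii hT m hv hv2 (hs.trans (hsa.trans hab')) hbt ht j)
      refine hbd.trans ?_
      have h1 : Real.sqrt (t - b') ≤ Real.sqrt δ := Real.sqrt_le_sqrt (by linarith)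
      have h2 := hsub_sq b' t (hsa.trans hab') hbt le_rfl
      have hcr : (t-s)^α * Real.sqrt δ ≤ δ^α * Real.sqrt (t-s) := by
        rw [Real.sqrt_eq_rpow, Real.sqrt_eq_rpow]
        exact cross_exp hδ (by linarith) hα1.le hα2.le
      calc Hu*(t-s)^α * (Real.sqrt (t-b') * Real.sqrt (∫ r in b'..t, (gg r)^2))
          ≤ Hu*(t-s)^α * (Real.sqrt δ * G) := by
            refine mul_le_mul_of_nonneg_left ?_ hHts
            exact mul_le_mul h1 h2 (Real.sqrt_nonneg _) (Real.sqrt_nonneg _)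
        _ = Hu * ((t-s)^α * Real.sqrt δ) * G := by ring
        _ ≤ Hu * (δ^α * Real.sqrt (t-s)) * G := by
            refine mul_le_mul_of_nonneg_right
              (mul_le_mul_of_nonneg_left hcr hHu0) hG0
        _ = Hu*δ^α * (Real.sqrt (t-s) * G) := by ring
    -- combine
    calc |∫ r in s..t, (u r i - u s i) * gg r|
        ≤ |∫ r in s..a', (u r i - u s i) * gg r|
          + |∫ r in a'..b', (u r i - u s i) * gg r|
          + |∫ r in b'..t, (u r i - u s i) * gg r| := by
          rw [hsp1, hsp2]
          have hA1 := abs_add_le (∫ r in s..a', (u r i - u s i) * gg r)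
            ((∫ r in a'..b', (u r i - u s i) * gg r)
              + ∫ r in b'..t, (u r i - u s i) * gg r)
          have hA2 := abs_add_le (∫ r in a'..b', (u r i - u s i) * gg r)
            (∫ r in b'..t, (u r i - u s i) * gg r)
          linarith
      _ ≤ Hu*δ^α * (Real.sqrt (t-s) * G) + Hu*δ^α * (Real.sqrt (t-s) * G)
          + Hu*δ^α * (Real.sqrt (t-s) * G) := by
          have h2 : |∫ r in a'..b', (u r i - u s i) * gg r|
              ≤ Hu*δ^α * (Real.sqrt (t-s) * G) := by
            rw [hsum]; exact hI2
          linarith [hI1, hI3, h2]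
      _ ≤ 4 * Hu * (δ^α * Real.sqrt (t-s)) * G := by
          have h9 : 0 ≤ Hu*δ^α * (Real.sqrt (t-s) * G) :=
            mul_nonneg hHδ (mul_nonneg (Real.sqrt_nonneg _) hG0)
          nlinarith

theorem rpow_comb {x : ℝ} (hx : 0 < x) (α : ℝ) :
    x^α * Real.sqrt x = x^(α+1/2) := by
  rw [Real.sqrt_eq_rpow, ← Real.rpow_add hx]

theorem sqrt_four_mul {y : ℝ} : Real.sqrt (4*y) = 2 * Real.sqrt y := by
  rw [Real.sqrt_mul (by norm_num : (0:ℝ) ≤ 4)]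
  congr 1
  rw [show (4:ℝ) = 2^2 by norm_num]
  exact Real.sqrt_sq (by norm_num : (0:ℝ) ≤ 2)

theorem interp_compute {P ts dl α κ : ℝ} (hP : 0 ≤ P) (hts : 0 < ts)
    (hdl : 0 < dl) (hα1 : 0 < α) (hκ0 : 0 < κ) (hκα : κ < α) :
    (2*(P*ts^(α+1/2)))^(1-κ/α) * (8*(P*(dl^α*ts^((1:ℝ)/2))))^(κ/α)
      ≤ 16*(P*(dl^κ*ts^(α+1/2-κ))) := by
  set θ := κ/α with hθdef
  have hθ0 : 0 < θ := div_pos hκ0 hα1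
  have hθ1 : θ < 1 := (div_lt_one hα1).2 hκα
  have hXnn : (0:ℝ) ≤ ts^(α+1/2) := Real.rpow_nonneg hts.le _
  have hYnn : (0:ℝ) ≤ dl^α*ts^((1:ℝ)/2) :=
    mul_nonneg (Real.rpow_nonneg hdl.le _) (Real.rpow_nonneg hts.le _)
  have e1 : (2*(P*ts^(α+1/2)))^(1-θ)
      = 2^(1-θ) * (P^(1-θ) * ts^((α+1/2)*(1-θ))) := by
    rw [Real.mul_rpow (by norm_num) (mul_nonneg hP hXnn),
      Real.mul_rpow hP hXnn, ← Real.rpow_mul hts.le]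
  have e2 : (8*(P*(dl^α*ts^((1:ℝ)/2))))^θ
      = 8^θ * (P^θ * (dl^(α*θ) * ts^(((1:ℝ)/2)*θ))) := by
    rw [Real.mul_rpow (by norm_num) (mul_nonneg hP hYnn),
      Real.mul_rpow hP hYnn,
      Real.mul_rpow (Real.rpow_nonneg hdl.le _) (Real.rpow_nonneg hts.le _),
      ← Real.rpow_mul hdl.le, ← Real.rpow_mul hts.le]
  have eP : P^(1-θ)*P^θ = P := by
    rw [← Real.rpow_add' hP (by norm_num : (1-θ)+θ ≠ 0)]
    norm_num
  have ets : ts^((α+1/2)*(1-θ)) * ts^(((1:ℝ)/2)*θ) = ts^(α+1/2-κ) := by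
    rw [← Real.rpow_add hts]
    congr 1
    rw [hθdef]
    field_simp
    ring
  have edl : dl^(α*θ) = dl^κ := by
    congr 1
    rw [hθdef]
    field_simp
  have econst : (2:ℝ)^(1-θ)*(8:ℝ)^θ ≤ 16 := by
    have h2 : (2:ℝ)^(1-θ) ≤ 2 := by
      calc (2:ℝ)^(1-θ) ≤ 2^(1:ℝ) :=
            Real.rpow_le_rpow_of_exponent_le one_le_two (by linarith)
        _ = 2 := Real.rpow_one 2
    have h8 : (8:ℝ)^θ ≤ 8 := by
      calc (8:ℝ)^θ ≤ 8^(1:ℝ) :=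
            Real.rpow_le_rpow_of_exponent_le (by norm_num) hθ1.le
        _ = 8 := Real.rpow_one 8
    calc (2:ℝ)^(1-θ)*(8:ℝ)^θ ≤ 2*8 :=
          mul_le_mul h2 h8 (Real.rpow_nonneg (by norm_num) _) (by norm_num)
      _ = 16 := by norm_num
  calc (2*(P*ts^(α+1/2)))^(1-θ) * (8*(P*(dl^α*ts^((1:ℝ)/2))))^θ
      = ((2:ℝ)^(1-θ)*(8:ℝ)^θ) * ((P^(1-θ)*P^θ)
          * ((ts^((α+1/2)*(1-θ)) * ts^(((1:ℝ)/2)*θ)) * dl^(α*θ))) := by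
        rw [e1, e2]
        ring
    _ = ((2:ℝ)^(1-θ)*(8:ℝ)^θ) * (P * (ts^(α+1/2-κ) * dl^κ)) := by
        rw [eP, ets, edl]
    _ ≤ 16 * (P * (ts^(α+1/2-κ) * dl^κ)) := by
        refine mul_le_mul_of_nonneg_right econst ?_
        exact mul_nonneg hP (mul_nonneg (Real.rpow_nonneg hts.le _)
          (Real.rpow_nonneg hdl.le _))
    _ = 16*(P*(dl^κ*ts^(α+1/2-κ))) := by ring

theorem delta_pow {T κ : ℝ} (hT : 0 < T) (m : ℕ) :
    (T/2^m)^κ = T^κ * (2:ℝ)^(-(κ*(m:ℝ))) := by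
  rw [Real.div_rpow hT.le (by positivity)]
  rw [div_eq_mul_inv]
  congr 1
  rw [← Real.rpow_natCast 2 m, ← Real.rpow_mul (by norm_num : (0:ℝ) ≤ 2),
    ← Real.rpow_neg (by norm_num : (0:ℝ) ≤ 2)]
  congr 1
  ring

theorem L2_nonneg {e : ℕ} {T : ℝ} (hT : 0 < T) (v' : ℝ → Fin e → ℝ) :
    0 ≤ ∫ r in (0:ℝ)..T, ‖v' r‖^2 :=
  intervalIntegral.integral_nonneg hT.le (fun x _ => sq_nonneg _)

theorem parti_pair {d e : ℕ} {T α : ℝ} (hT : 0 < T) (hα1 : 0 < α)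
    {u : ℝ → Fin d → ℝ} {Cu : ℝ}
    (hu : ∀ s t, 0 ≤ s → s ≤ t → t ≤ T → ‖u t - u s‖ ≤ Cu * (t-s)^α)
    {v' : ℝ → Fin e → ℝ}
    (hv : IntervalIntegrable v' volume 0 T)
    (hv2 : IntervalIntegrable (fun s => ‖v' s‖^2) volume 0 T)
    (m : ℕ) {s t : ℝ} (hs : 0 ≤ s) (hst : s < t) (ht : t ≤ T) :
    ‖crossIm T m u v' s t‖
      ≤ hnormP T α u * (1 + Real.sqrt (∫ r in (0:ℝ)..T, ‖v' r‖^2))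
          * (t-s)^(α+1/2) := by
  set Hu := hnormP T α u with hHudef
  set SL := Real.sqrt (∫ r in (0:ℝ)..T, ‖v' r‖^2) with hSLdef
  have hHu0 : 0 ≤ Hu := hnormP_nonneg _ _ _
  have hSL0 : 0 ≤ SL := Real.sqrt_nonneg _
  have hM0 : 0 ≤ Hu * (1 + SL) * (t-s)^(α+1/2) :=
    mul_nonneg (mul_nonneg hHu0 (by linarith))
      (Real.rpow_nonneg (by linarith) _)
  refine (pi_norm_le_iff_of_nonneg hM0).2 (fun i => ?_)
  refine (pi_norm_le_iff_of_nonneg hM0).2 (fun j => ?_)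
  rw [Real.norm_eq_abs]
  rw [crossIm_eq hT m u hv hs hst.le ht i j]
  have hts0 : (0:ℝ) ≤ t - s := by linarith
  have hbd := est_A hα1 hu (g := fun r => Dstep T m (fun r => v' r j) r)
    (a := s) (b := t) (c := s) hs le_rfl hst.le ht (C := Hu*(t-s)^α)
    (fun r hr => mul_le_mul_of_nonneg_left
      (Real.rpow_le_rpow (sub_nonneg.2 hr.1) (by linarith [hr.2]) hα1.le) hHu0)
    (mul_nonneg hHu0 (Real.rpow_nonneg hts0 _)) i
    (Dstep_ii hT m _ (uIcc_sub_Icc hs hst.le ht))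
    (Dstep_sq_ii hT m _ (uIcc_sub_Icc hs hst.le ht))
  have hsq : Real.sqrt (∫ x in s..t, (Dstep T m (fun r => v' r j) x)^2) ≤ SL := by
    rw [hSLdef]
    exact Real.sqrt_le_sqrt (Dsq_int_le_L2 hT m hv hv2 hs hst.le ht j)
  calc |∫ r in s..t, (u r i - u s i) * Dstep T m (fun r => v' r j) r|
      ≤ Hu*(t-s)^α * (Real.sqrt (t-s)
          * Real.sqrt (∫ x in s..t, (Dstep T m (fun r => v' r j) x)^2)) := hbd
    _ ≤ Hu*(t-s)^α * (Real.sqrt (t-s) * SL) := by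
        refine mul_le_mul_of_nonneg_left ?_
          (mul_nonneg hHu0 (Real.rpow_nonneg hts0 _))
        exact mul_le_mul_of_nonneg_left hsq (Real.sqrt_nonneg _)
    _ = Hu * SL * ((t-s)^α * Real.sqrt (t-s)) := by ring
    _ = Hu * SL * (t-s)^(α+1/2) := by rw [rpow_comb (by linarith : (0:ℝ) < t-s)]
    _ ≤ Hu * (1+SL) * (t-s)^(α+1/2) := by
        refine mul_le_mul_of_nonneg_right ?_ (Real.rpow_nonneg hts0 _)
        exact mul_le_mul_of_nonneg_left (by linarith) hHu0

theorem part_i {d e : ℕ} {T α : ℝ} (hT : 0 < T) (hα1 : 0 < α)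
    {u : ℝ → Fin d → ℝ} {Cu : ℝ}
    (hu : ∀ s t, 0 ≤ s → s ≤ t → t ≤ T → ‖u t - u s‖ ≤ Cu * (t-s)^α)
    {v' : ℝ → Fin e → ℝ}
    (hv : IntervalIntegrable v' volume 0 T)
    (hv2 : IntervalIntegrable (fun s => ‖v' s‖^2) volume 0 T)
    (m : ℕ) :
    hnorm2 T (α + 1/2) (crossIm T m u v')
      ≤ 1 * hnormP T α u *
        (1 + (∫ s in (0:ℝ)..T, ‖v' s‖^2) ^ ((1:ℝ)/2)) := by
  rw [← Real.sqrt_eq_rpow, one_mul]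
  have hHu0 : 0 ≤ hnormP T α u := hnormP_nonneg _ _ _
  have hSL0 : 0 ≤ Real.sqrt (∫ s in (0:ℝ)..T, ‖v' s‖^2) := Real.sqrt_nonneg _
  refine hnorm2_le_of_forall (mul_nonneg hHu0 (by linarith)) ?_
  intro s t hs hst ht
  exact parti_pair hT hα1 hu hv hv2 m hs hst ht

theorem partii_entry {d e : ℕ} {T α : ℝ} (hT : 0 < T) (hα1 : 0 < α)
    (hα2 : α < 1/2) {u : ℝ → Fin d → ℝ} {Cu : ℝ}
    (hu : ∀ s t, 0 ≤ s → s ≤ t → t ≤ T → ‖u t - u s‖ ≤ Cu * (t-s)^α)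
    {v' : ℝ → Fin e → ℝ}
    (hv : IntervalIntegrable v' volume 0 T)
    (hv2 : IntervalIntegrable (fun s => ‖v' s‖^2) volume 0 T)
    (m : ℕ) {s t : ℝ} (hs : 0 ≤ s) (hst : s < t) (ht : t ≤ T)
    (i : Fin d) (j : Fin e) {κ : ℝ} (hκ0 : 0 < κ) (hκα : κ < α) :
    |crossIm T m u v' s t i j - crossI u v' s t i j|
      ≤ 16*((hnormP T α u * Real.sqrt (∫ r in (0:ℝ)..T, ‖v' r‖^2)) *
          ((T/2^m)^κ * (t-s)^(α+1/2-κ))) := by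
  have h2m : (0:ℝ) < 2^m := by positivity
  have hδ : (0:ℝ) < T/2^m := by positivity
  set Hu := hnormP T α u with hHudef
  set SL := Real.sqrt (∫ r in (0:ℝ)..T, ‖v' r‖^2) with hSLdef
  have hHu0 : 0 ≤ Hu := hnormP_nonneg _ _ _
  have hSL0 : 0 ≤ SL := Real.sqrt_nonneg _
  have hts : (0:ℝ) < t - s := by linarith
  set gg : ℝ → ℝ := fun r => Dstep T m (fun r => v' r j) r - v' r j with hggdef
  set G := Real.sqrt (∫ r in s..t, (gg r)^2) with hGdef
  have hG0 : 0 ≤ G := Real.sqrt_nonneg _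
  have hGle : G ≤ 2*SL := by
    rw [hGdef, hSLdef]
    calc Real.sqrt (∫ r in s..t, (gg r)^2)
        ≤ Real.sqrt (4 * ∫ r in (0:ℝ)..T, ‖v' r‖^2) :=
          Real.sqrt_le_sqrt (g_sq_le hT m hv hv2 hs hst.le ht j)
      _ = 2 * Real.sqrt (∫ r in (0:ℝ)..T, ‖v' r‖^2) := sqrt_four_mul
  -- identify the difference with the integral
  have hucont : ContinuousOn (fun r => u r i - u s i) (Set.uIcc s t) := by
    rw [Set.uIcc_of_le hst.le]
    exact ((u_contOn hα1 hu i).mono (Set.Icc_subset_Icc hs ht)).sub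
      continuousOn_const
  have hfD : IntervalIntegrable
      (fun r => (u r i - u s i) * Dstep T m (fun r => v' r j) r) volume s t :=
    (Dstep_ii hT m _ (uIcc_sub_Icc hs hst.le ht)).continuousOn_mul hucont
  have hfgv : IntervalIntegrable
      (fun r => (u r i - u s i) * v' r j) volume s t :=
    (comp_ii hv (uIcc_sub_uIcc hs hst.le ht) j).continuousOn_mul hucont
  have hdiff : crossIm T m u v' s t i j - crossI u v' s t i j
      = ∫ r in s..t, (u r i - u s i) * gg r := by
    rw [crossIm_eq hT m u hv hs hst.le ht i j]
    show _ - (∫ r in s..t, (u r i - u s i) * v' r j) = _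
    rw [← intervalIntegral.integral_sub hfD hfgv]
    exact intervalIntegral.integral_congr (fun r _ => by
      show _ = (u r i - u s i) * (Dstep T m (fun r => v' r j) r - v' r j)
      ring)
  rw [hdiff]
  -- bound A
  have hbdA : |∫ r in s..t, (u r i - u s i) * gg r|
      ≤ 2*((Hu*SL)*(t-s)^(α+1/2)) := by
    have hbd := est_A hα1 hu (g := gg) (a := s) (b := t) (c := s) hs le_rfl
      hst.le ht (C := Hu*(t-s)^α)
      (fun r hr => mul_le_mul_of_nonneg_left
        (Real.rpow_le_rpow (sub_nonneg.2 hr.1) (by linarith [hr.2]) hα1.le) hHu0)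
      (mul_nonneg hHu0 (Real.rpow_nonneg hts.le _)) i
      (g_ii hT m hv hs hst.le ht j) (g_sq_ii hT m hv hv2 hs hst.le ht j)
    calc |∫ r in s..t, (u r i - u s i) * gg r|
        ≤ Hu*(t-s)^α * (Real.sqrt (t-s) * G) := hbd
      _ ≤ Hu*(t-s)^α * (Real.sqrt (t-s) * (2*SL)) := by
          refine mul_le_mul_of_nonneg_left
            (mul_le_mul_of_nonneg_left hGle (Real.sqrt_nonneg _))
            (mul_nonneg hHu0 (Real.rpow_nonneg hts.le _))
      _ = 2*((Hu*SL)*((t-s)^α * Real.sqrt (t-s))) := by ring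
      _ = 2*((Hu*SL)*(t-s)^(α+1/2)) := by rw [rpow_comb hts]
  -- bound B
  have hbdB : |∫ r in s..t, (u r i - u s i) * gg r|
      ≤ 8*((Hu*SL)*((T/2^m)^α*(t-s)^((1:ℝ)/2))) := by
    have hbd := est_B hT hα1 hα2 hu hv hv2 m hs hst ht i j
    calc |∫ r in s..t, (u r i - u s i) * gg r|
        ≤ 4 * Hu * ((T/2^m)^α * Real.sqrt (t-s)) * G := hbd
      _ ≤ 4 * Hu * ((T/2^m)^α * Real.sqrt (t-s)) * (2*SL) := by
          refine mul_le_mul_of_nonneg_left hGle ?_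
          exact mul_nonneg (mul_nonneg (by norm_num) hHu0)
            (mul_nonneg (Real.rpow_nonneg hδ.le _) (Real.sqrt_nonneg _))
      _ = 8*((Hu*SL)*((T/2^m)^α * Real.sqrt (t-s))) := by ring
      _ = 8*((Hu*SL)*((T/2^m)^α * (t-s)^((1:ℝ)/2))) := by
          rw [Real.sqrt_eq_rpow]
  -- interpolate
  have hint := interp (abs_nonneg _) hbdA hbdB
    (le_of_lt (div_pos hκ0 hα1)) (le_of_lt ((div_lt_one hα1).2 hκα))
  refine hint.trans ?_
  exact interp_compute (mul_nonneg hHu0 hSL0) hts hδ hα1 hκ0 hκα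

theorem part_ii {d e : ℕ} {T α : ℝ} (hT : 0 < T) (hα1 : 0 < α)
    (hα2 : α < 1/2) {u : ℝ → Fin d → ℝ} {Cu : ℝ}
    (hu : ∀ s t, 0 ≤ s → s ≤ t → t ≤ T → ‖u t - u s‖ ≤ Cu * (t-s)^α)
    {v' : ℝ → Fin e → ℝ}
    (hv : IntervalIntegrable v' volume 0 T)
    (hv2 : IntervalIntegrable (fun s => ‖v' s‖^2) volume 0 T)
    {κ : ℝ} (hκ0 : 0 < κ) (hκα : κ < α) (m : ℕ) :
    hnorm2 T (α + 1/2 - κ) (fun s t => crossIm T m u v' s t - crossI u v' s t)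
      ≤ 16*(1+T)^κ * (2:ℝ)^(-(κ*(m:ℝ))) * hnormP T α u *
        (1 + (∫ s in (0:ℝ)..T, ‖v' s‖^2) ^ ((1:ℝ)/2)) := by
  rw [← Real.sqrt_eq_rpow]
  set Hu := hnormP T α u with hHudef
  set SL := Real.sqrt (∫ s in (0:ℝ)..T, ‖v' s‖^2) with hSLdef
  have hHu0 : 0 ≤ Hu := hnormP_nonneg _ _ _
  have hSL0 : 0 ≤ SL := Real.sqrt_nonneg _
  have h1T : (0:ℝ) ≤ (1+T)^κ := Real.rpow_nonneg (by linarith) _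
  have h2κ : (0:ℝ) ≤ (2:ℝ)^(-(κ*(m:ℝ))) := Real.rpow_nonneg (by norm_num) _
  have hM0 : 0 ≤ 16*(1+T)^κ * (2:ℝ)^(-(κ*(m:ℝ))) * Hu * (1 + SL) := by
    refine mul_nonneg (mul_nonneg (mul_nonneg ?_ h2κ) hHu0) (by linarith)
    exact mul_nonneg (by norm_num) h1T
  refine hnorm2_le_of_forall hM0 ?_
  intro s t hs hst ht
  have hentry : ∀ i : Fin d, ∀ j : Fin e,
      |(crossIm T m u v' s t - crossI u v' s t) i j|
        ≤ 16*((Hu*SL)*((T/2^m)^κ * (t-s)^(α+1/2-κ))) := by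
    intro i j
    have : (crossIm T m u v' s t - crossI u v' s t) i j
        = crossIm T m u v' s t i j - crossI u v' s t i j := rfl
    rw [this]
    exact partii_entry hT hα1 hα2 hu hv hv2 m hs hst ht i j hκ0 hκα
  have hkey : 16*((Hu*SL)*((T/2^m)^κ * (t-s)^(α+1/2-κ)))
      ≤ 16*(1+T)^κ * (2:ℝ)^(-(κ*(m:ℝ))) * Hu * (1 + SL) * (t-s)^(α+1/2-κ) := by
    rw [delta_pow hT m]
    have hTκ : T^κ ≤ (1+T)^κ :=
      Real.rpow_le_rpow hT.le (by linarith) hκ0.le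
    have hHuSL : Hu*SL ≤ Hu*(1+SL) :=
      mul_le_mul_of_nonneg_left (by linarith) hHu0
    have hts' : (0:ℝ) ≤ (t-s)^(α+1/2-κ) :=
      Real.rpow_nonneg (by linarith) _
    calc 16*((Hu*SL)*((T^κ * (2:ℝ)^(-(κ*(m:ℝ)))) * (t-s)^(α+1/2-κ)))
        = (16 * (2:ℝ)^(-(κ*(m:ℝ))) * (t-s)^(α+1/2-κ)) * (T^κ * (Hu*SL)) := by
          ring
      _ ≤ (16 * (2:ℝ)^(-(κ*(m:ℝ))) * (t-s)^(α+1/2-κ)) * ((1+T)^κ * (Hu*(1+SL))) := by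
          refine mul_le_mul_of_nonneg_left ?_ ?_
          · exact mul_le_mul hTκ hHuSL (mul_nonneg hHu0 hSL0) h1T
          · exact mul_nonneg (mul_nonneg (by norm_num) h2κ) hts'
      _ = 16*(1+T)^κ * (2:ℝ)^(-(κ*(m:ℝ))) * Hu * (1 + SL) * (t-s)^(α+1/2-κ) := by
          ring
  have hM0' : 0 ≤ 16*(1+T)^κ * (2:ℝ)^(-(κ*(m:ℝ))) * Hu * (1 + SL)
      * (t-s)^(α+1/2-κ) :=
    mul_nonneg hM0 (Real.rpow_nonneg (by linarith) _)
  refine (pi_norm_le_iff_of_nonneg hM0').2 (fun i => ?_)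
  refine (pi_norm_le_iff_of_nonneg hM0').2 (fun j => ?_)
  rw [Real.norm_eq_abs]
  exact (hentry i j).trans hkey

end DCYA

/-- **Dyadic approximation of cross Young integrals.**  Let `0 < α < 1/2`, `T > 0`.
For `u ∈ C^{α}([0,T],ℝ^d)` with `u_0 = 0` and `v ∈ H^{1/2,e}` (absolutely continuous
with `L²` derivative `v'`), with `v(m)` the dyadic piecewise-linear interpolation:
(i) `sup_m ‖I[u,v(m)]‖_{(α+1/2)-hld} ≤ C ‖u‖_{α-hld} (1 + ‖v‖_{H^{1/2,e}})`;
(ii) for every `0 < κ < α`,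
`‖I[u,v(m)] - I[u,v]‖_{(α+1/2-κ)-hld} ≤ C 2^{-κ m} ‖u‖_{α-hld}(1 + ‖v‖_{H^{1/2,e}})`,
and in particular `I[u,v(m)] → I[u,v]` in `(α+1/2-κ)`-Hölder norm.
All constants depend only on `α`, `κ` and `T`. -/
theorem dyadic_cross_young_approximation
    (T α : ℝ) (d e : ℕ) (hα1 : 0 < α) (hα2 : α < 1/2) (hT : 0 < T) :
    (∃ C > 0, ∀ (u : ℝ → Fin d → ℝ) (v' : ℝ → Fin e → ℝ),
      u 0 = 0 →
      (∃ Cu : ℝ, ∀ s t, 0 ≤ s → s ≤ t → t ≤ T → ‖u t - u s‖ ≤ Cu * (t - s) ^ α) →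
      IntervalIntegrable v' MeasureTheory.volume 0 T →
      IntervalIntegrable (fun s => ‖v' s‖ ^ 2) MeasureTheory.volume 0 T →
      ∀ m : ℕ,
        hnorm2 T (α + 1/2) (crossIm T m u v')
          ≤ C * hnormP T α u *
            (1 + (∫ s in (0:ℝ)..T, ‖v' s‖ ^ 2) ^ ((1:ℝ)/2))) ∧
    (∀ κ : ℝ, 0 < κ → κ < α →
      ∃ C > 0, ∀ (u : ℝ → Fin d → ℝ) (v' : ℝ → Fin e → ℝ),
        u 0 = 0 →
        (∃ Cu : ℝ, ∀ s t, 0 ≤ s → s ≤ t → t ≤ T → ‖u t - u s‖ ≤ Cu * (t - s) ^ α) →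
        IntervalIntegrable v' MeasureTheory.volume 0 T →
        IntervalIntegrable (fun s => ‖v' s‖ ^ 2) MeasureTheory.volume 0 T →
        (∀ m : ℕ,
          hnorm2 T (α + 1/2 - κ)
              (fun s t => crossIm T m u v' s t - crossI u v' s t)
            ≤ C * (2:ℝ) ^ (-(κ * m)) * hnormP T α u *
              (1 + (∫ s in (0:ℝ)..T, ‖v' s‖ ^ 2) ^ ((1:ℝ)/2))) ∧
        Tendsto
          (fun m : ℕ => hnorm2 T (α + 1/2 - κ)
            (fun s t => crossIm T m u v' s t - crossI u v' s t))
          atTop (nhds 0)) := by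
  constructor
  · refine ⟨1, one_pos, ?_⟩
    intro u v' hu0 hCu hv hv2 m
    obtain ⟨Cu, hu⟩ := hCu
    exact DCYA.part_i hT hα1 hu hv hv2 m
  · intro κ hκ0 hκα
    refine ⟨16*(1+T)^κ,
      mul_pos (by norm_num) (Real.rpow_pos_of_pos (by linarith) _), ?_⟩
    intro u v' hu0 hCu hv hv2
    obtain ⟨Cu, hu⟩ := hCu
    have hbound := fun m : ℕ => DCYA.part_ii hT hα1 hα2 hu hv hv2 hκ0 hκα m
    refine ⟨hbound, ?_⟩
    have h0 : ∀ m : ℕ, 0 ≤ hnorm2 T (α + 1/2 - κ)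
        (fun s t => crossIm T m u v' s t - crossI u v' s t) :=
      fun m => DCYA.hnorm2_nonneg _ _ _
    have hgeo : Tendsto (fun m : ℕ => 16*(1+T)^κ * (2:ℝ)^(-(κ*(m:ℝ)))
        * hnormP T α u * (1 + (∫ s in (0:ℝ)..T, ‖v' s‖^2)^((1:ℝ)/2)))
        atTop (nhds 0) := by
      have heq : ∀ m : ℕ, 16*(1+T)^κ * (2:ℝ)^(-(κ*(m:ℝ)))
          * hnormP T α u * (1 + (∫ s in (0:ℝ)..T, ‖v' s‖^2)^((1:ℝ)/2))
          = (16*(1+T)^κ * hnormP T α u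
            * (1 + (∫ s in (0:ℝ)..T, ‖v' s‖^2)^((1:ℝ)/2))) * ((2:ℝ)^(-κ))^m := by
        intro m
        have e1 : (2:ℝ)^(-(κ*(m:ℝ))) = ((2:ℝ)^(-κ))^m := by
          rw [← Real.rpow_natCast ((2:ℝ)^(-κ)) m,
            ← Real.rpow_mul (by norm_num : (0:ℝ) ≤ 2)]
          congr 1
          ring
        rw [e1]
        ring
      have hlt : (2:ℝ)^(-κ) < 1 :=
        Real.rpow_lt_one_of_one_lt_of_neg one_lt_two (by linarith)
      have h0' : (0:ℝ) ≤ (2:ℝ)^(-κ) := Real.rpow_nonneg (by norm_num) _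
      have hgeo' := (tendsto_pow_atTop_nhds_zero_of_lt_one h0' hlt).const_mul
        (16*(1+T)^κ * hnormP T α u * (1 + (∫ s in (0:ℝ)..T, ‖v' s‖^2)^((1:ℝ)/2)))
      rw [mul_zero] at hgeo'
      exact hgeo'.congr (fun m => (heq m).symm)
    exact squeeze_zero h0 hbound hgeo
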